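/- arXiv:1304.5939 — 4 statements merged into one kernel-verified Lean document; each statement's English description precedes it below -/
import Mathlib

section
/- (Hoeffding's condition, sufficiency) Let Gₙ and Gₙ' be independent random elements, each uniformly distributed over a finite group 𝐆ₙ of transformations of the sample space, independent of the data Xⁿ. If the pair (Tₙ(GₙXⁿ), Tₙ(Gₙ'Xⁿ)) converges in distribution to (T, T') where T and T' are independent with common c.d.f. R, then the randomization distribution R̂ₙ(t) = |Gₙ|⁻¹ Σ_{g∈Gₙ} I{Tₙ(gXⁿ) ≤ t} converges in probability to R(t) at every continuity point t of R. -/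
open MeasureTheory Filter
open scoped ENNReal BoundedContinuousFunction Topology

/-- At a continuity point of the c.d.f., the measure has no atom. -/
lemma cdf_cont_no_atom (ν : Measure ℝ) [IsProbabilityMeasure ν]
    (R : ℝ → ℝ) (hR : ∀ t, R t = (ν (Set.Iic t)).toReal) (t : ℝ)
    (ht : ContinuousAt R t) : ν {t} = 0 := by
  have hseq : Filter.Tendsto (fun k : ℕ => t - (1 / (k + 1) : ℝ)) atTop (𝓝 t) := by
    have := tendsto_one_div_add_atTop_nhds_zero_nat (𝕜 := ℝ)
    simpa using tendsto_const_nhds.sub this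
  have hmono : Monotone (fun k : ℕ => Set.Iic (t - (1 / (k + 1) : ℝ))) := by
    intro i j hij
    apply Set.Iic_subset_Iic.mpr
    have : (1 / (j + 1) : ℝ) ≤ 1 / (i + 1) := by
      apply one_div_le_one_div_of_le (by positivity)
      exact_mod_cast add_le_add_left (Nat.cast_le.mpr hij) 1
    linarith
  have hunion : (⋃ k : ℕ, Set.Iic (t - (1 / (k + 1) : ℝ))) = Set.Iio t := by
    ext y
    simp only [Set.mem_iUnion, Set.mem_Iic, Set.mem_Iio]
    constructor
    · rintro ⟨k, hk⟩
      have : (0:ℝ) < 1 / (k + 1) := by positivity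
      linarith
    · intro hy
      obtain ⟨k, hk⟩ := exists_nat_one_div_lt (sub_pos.mpr hy)
      exact ⟨k, by linarith⟩
  have h1 : Tendsto (fun k : ℕ => ν (Set.Iic (t - (1 / (k + 1) : ℝ)))) atTop
      (𝓝 (ν (Set.Iio t))) := by
    rw [← hunion]
    exact tendsto_measure_iUnion_atTop hmono
  have h1' : Tendsto (fun k : ℕ => (ν (Set.Iic (t - (1 / (k + 1) : ℝ)))).toReal) atTop
      (𝓝 ((ν (Set.Iio t)).toReal)) :=
    (ENNReal.tendsto_toReal (measure_ne_top _ _)).comp h1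
  have h2 : Tendsto (fun k : ℕ => R (t - (1 / (k + 1) : ℝ))) atTop (𝓝 (R t)) :=
    ht.tendsto.comp hseq
  have h2' : Tendsto (fun k : ℕ => (ν (Set.Iic (t - (1 / (k + 1) : ℝ)))).toReal) atTop
      (𝓝 (R t)) := by
    refine h2.congr fun k => ?_
    rw [hR]
  have heq : (ν (Set.Iio t)).toReal = (ν (Set.Iic t)).toReal := by
    rw [← hR]
    exact tendsto_nhds_unique h1' h2'
  have heq' : ν (Set.Iio t) = ν (Set.Iic t) :=
    (ENNReal.toReal_eq_toReal_iff' (measure_ne_top _ _) (measure_ne_top _ _)).mp heq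
  have hsplit : ν (Set.Iio t) + ν {t} = ν (Set.Iic t) := by
    rw [← measure_union (by simp) (measurableSet_singleton t), Set.Iio_union_right]
  rw [← heq'] at hsplit
  exact (ENNReal.add_right_inj (measure_ne_top ν (Set.Iio t))).mp
    (by rw [hsplit, add_zero])

/-- Hoeffding's condition, sufficiency.  For each `n`, the data `Xⁿ` lives in
`𝒳 n` with law `μ n`, and `G n` is a finite group acting (measurably) on `𝒳 n`.  Let `g, g'`
be independent uniform random elements of `G n`, independent of the data (modelled by the
product measure `uniform ⊗ uniform ⊗ μ n` on `G n × G n × 𝒳 n`).  If the pair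
`(Tₙ(g•Xⁿ), Tₙ(g'•Xⁿ))` converges in distribution (weakly, tested against bounded continuous
functions) to `ν ⊗ ν` — i.e. to independent `(T, T')` with common c.d.f.
`R t = ν(-∞, t]` — then the randomization distribution
`R̂ₙ(t) = |Gₙ|⁻¹ Σ_g 1{Tₙ(g•Xⁿ) ≤ t}` converges in probability to `R t` at every
continuity point `t` of `R`. -/
theorem hoeffding_condition_sufficiency
    {𝒳 : ℕ → Type*} [∀ n, MeasurableSpace (𝒳 n)]
    {G : ℕ → Type*} [∀ n, Group (G n)] [∀ n, Fintype (G n)]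
    [∀ n, MeasurableSpace (G n)] [∀ n, MeasurableSingletonClass (G n)]
    [∀ n, MulAction (G n) (𝒳 n)]
    (hact : ∀ n (g : G n), Measurable fun x : 𝒳 n => g • x)
    (μ : ∀ n, Measure (𝒳 n)) (hprob : ∀ n, IsProbabilityMeasure (μ n))
    (T : ∀ n, 𝒳 n → ℝ) (hT : ∀ n, Measurable (T n))
    -- the uniform distribution on the finite group `G n`
    (uG : ∀ n, Measure (G n))
    (huG : ∀ n, uG n = ((Fintype.card (G n) : ℝ≥0∞))⁻¹ • Measure.count)
    -- the limit law `ν` of `T`, with c.d.f. `R`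
    (ν : Measure ℝ) [IsProbabilityMeasure ν]
    (R : ℝ → ℝ) (hR : ∀ t, R t = (ν (Set.Iic t)).toReal)
    -- Hoeffding's condition: joint convergence in distribution to independent (T, T')
    (hconv : ∀ f : (ℝ × ℝ) →ᵇ ℝ,
      Tendsto (fun n => ∫ x, f (T n (x.1 • x.2.2), T n (x.2.1 • x.2.2))
          ∂((uG n).prod ((uG n).prod (μ n))))
        atTop (𝓝 (∫ p, f p ∂(ν.prod ν))))
    -- the randomization distribution
    (Rhat : ∀ n, ℝ → 𝒳 n → ℝ)
    (hRhat : ∀ n t x, Rhat n t x =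
      (Fintype.card (G n) : ℝ)⁻¹ * ∑ g : G n, if T n (g • x) ≤ t then (1 : ℝ) else 0) :
    ∀ t : ℝ, ContinuousAt R t →
      ∀ ε > 0, Tendsto (fun n => μ n {x | ε ≤ |Rhat n t x - R t|}) atTop (𝓝 0) := by
  intro t ht ε hε
  -- notation
  set P : ∀ n, Measure (G n × G n × 𝒳 n) := fun n => (uG n).prod ((uG n).prod (μ n)) with hP
  set Φ : ∀ n, G n × G n × 𝒳 n → ℝ × ℝ :=
    fun n ω => (T n (ω.1 • ω.2.2), T n (ω.2.1 • ω.2.2)) with hΦdef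
  have hcard0 : ∀ n, (Fintype.card (G n) : ℝ≥0∞) ≠ 0 := by
    intro n; exact_mod_cast Fintype.card_ne_zero
  have hcardT : ∀ n, (Fintype.card (G n) : ℝ≥0∞) ≠ ∞ := fun n => ENNReal.natCast_ne_top _
  have huGP : ∀ n, IsProbabilityMeasure (uG n) := by
    intro n
    constructor
    rw [huG n]
    simp only [Measure.smul_apply, Measure.count_univ, smul_eq_mul, ENat.card_eq_coe_fintype_card, ENat.toENNReal_coe]
    exact ENNReal.inv_mul_cancel (hcard0 n) (hcardT n)
  have hPn : ∀ n, IsProbabilityMeasure (P n) := fun n => by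
    haveI := hprob n; haveI := huGP n; infer_instance
  -- measurability of Φ
  have hΦ1 : ∀ n, Measurable fun ω : G n × G n × 𝒳 n => T n (ω.1 • ω.2.2) := by
    intro n
    have hf : Measurable fun p : (G n × 𝒳 n) × G n => T n (p.2 • p.1.2) := by
      apply measurable_from_prod_countable_left
      intro g
      exact (hT n).comp ((hact n g).comp measurable_snd)
    exact hf.comp ((measurable_fst.comp measurable_snd |>.prodMk
      (measurable_snd.comp measurable_snd)).prodMk measurable_fst)
  have hΦ2 : ∀ n, Measurable fun ω : G n × G n × 𝒳 n => T n (ω.2.1 • ω.2.2) := by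
    intro n
    have hf : Measurable fun p : 𝒳 n × G n => T n (p.2 • p.1) := by
      apply measurable_from_prod_countable_left
      intro g
      exact (hT n).comp (hact n g)
    exact hf.comp ((measurable_snd.comp measurable_snd).prodMk
      (measurable_fst.comp measurable_snd))
  have hΦ : ∀ n, Measurable (Φ n) := fun n => (hΦ1 n).prodMk (hΦ2 n)
  -- the sets A n g
  set A : ∀ n, G n → Set (𝒳 n) := fun n g => {x | T n (g • x) ≤ t} with hAdef
  have hA : ∀ n g, MeasurableSet (A n g) := fun n g =>
    measurableSet_le ((hT n).comp (hact n g)) measurable_const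
  -- lintegral over the uniform measure is a normalized sum
  have hUG : ∀ n (f : G n → ℝ≥0∞),
      ∫⁻ g, f g ∂uG n = (Fintype.card (G n) : ℝ≥0∞)⁻¹ * ∑ g, f g := by
    intro n f
    rw [huG n, lintegral_smul_measure, lintegral_count, tsum_fintype, smul_eq_mul]
  -- first moment identity (as measures)
  have hP1 : ∀ n, P n (Φ n ⁻¹' (Set.Iic t ×ˢ Set.univ)) =
      (Fintype.card (G n) : ℝ≥0∞)⁻¹ * ∑ g, μ n (A n g) := by
    intro n
    haveI := hprob n; haveI := huGP n
    have hS : MeasurableSet (Set.Iic t ×ˢ (Set.univ : Set ℝ)) :=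
      measurableSet_Iic.prod MeasurableSet.univ
    rw [show P n = (uG n).prod ((uG n).prod (μ n)) from rfl,
      Measure.prod_apply ((hΦ n) hS)]
    have hsec : ∀ g : G n, (Prod.mk g ⁻¹' (Φ n ⁻¹' (Set.Iic t ×ˢ (Set.univ : Set ℝ)))) =
        (Set.univ : Set (G n)) ×ˢ A n g := by
      intro g; ext y
      simp [hΦdef, hAdef]
    simp only [hsec, Measure.prod_prod, measure_univ, one_mul]
    exact hUG n _
  have hP2 : ∀ n, P n (Φ n ⁻¹' (Set.Iic t ×ˢ Set.Iic t)) =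
      (Fintype.card (G n) : ℝ≥0∞)⁻¹ * ∑ g,
        ((Fintype.card (G n) : ℝ≥0∞)⁻¹ * ∑ g', μ n (A n g ∩ A n g')) := by
    intro n
    haveI := hprob n; haveI := huGP n
    have hS : MeasurableSet (Set.Iic t ×ˢ Set.Iic t) :=
      measurableSet_Iic.prod measurableSet_Iic
    rw [show P n = (uG n).prod ((uG n).prod (μ n)) from rfl,
      Measure.prod_apply ((hΦ n) hS)]
    have hmeas2 : ∀ g : G n,
        Measurable (fun y : G n × 𝒳 n => (T n (g • y.2), T n (y.1 • y.2))) := by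
      intro g
      refine Measurable.prodMk ((hT n).comp ((hact n g).comp measurable_snd)) ?_
      have hf : Measurable fun p : 𝒳 n × G n => T n (p.2 • p.1) :=
        measurable_from_prod_countable_left fun g' => (hT n).comp (hact n g')
      exact hf.comp (measurable_snd.prodMk measurable_fst)
    have hsec : ∀ g : G n, ((uG n).prod (μ n))
        (Prod.mk g ⁻¹' (Φ n ⁻¹' (Set.Iic t ×ˢ Set.Iic t))) =
        (Fintype.card (G n) : ℝ≥0∞)⁻¹ * ∑ g', μ n (A n g ∩ A n g') := by
      intro g
      have heq : (Prod.mk g ⁻¹' (Φ n ⁻¹' (Set.Iic t ×ˢ Set.Iic t))) =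
          (fun y : G n × 𝒳 n => (T n (g • y.2), T n (y.1 • y.2))) ⁻¹' (Set.Iic t ×ˢ Set.Iic t) := rfl
      rw [heq, Measure.prod_apply ((hmeas2 g) hS)]
      have hsec2 : ∀ g' : G n, (Prod.mk g' ⁻¹'
          ((fun y : G n × 𝒳 n => (T n (g • y.2), T n (y.1 • y.2))) ⁻¹'
            (Set.Iic t ×ˢ Set.Iic t))) = A n g ∩ A n g' := by
        intro g'; ext x
        simp [hAdef, Set.mem_inter_iff]
      simp only [hsec2]
      exact hUG n _
    simp only [hsec]
    exact hUG n _
  -- integral identities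
  have hEa : ∀ n, ∫ x, Rhat n t x ∂μ n =
      (Fintype.card (G n) : ℝ)⁻¹ * ∑ g, (μ n (A n g)).toReal := by
    intro n
    haveI := hprob n
    have hind : ∀ (g : G n) (x : 𝒳 n), (if T n (g • x) ≤ t then (1:ℝ) else 0) =
        (A n g).indicator (fun _ => (1:ℝ)) x := by
      intro g x
      simp [Set.indicator_apply, hAdef]
    calc ∫ x, Rhat n t x ∂μ n
        = ∫ x, (Fintype.card (G n) : ℝ)⁻¹ *
            ∑ g, (A n g).indicator (fun _ => (1:ℝ)) x ∂μ n := by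
          congr 1; funext x; rw [hRhat]; simp only [hind]
      _ = (Fintype.card (G n) : ℝ)⁻¹ * ∑ g, (μ n (A n g)).toReal := by
          rw [integral_const_mul,
            integral_finset_sum _ (fun g _ => (integrable_const (1:ℝ)).indicator (hA n g))]
          congr 1
          refine Finset.sum_congr rfl fun g _ => ?_
          rw [integral_indicator_const (1:ℝ) (hA n g)]
          simp [Measure.real]
  have hEb : ∀ n, ∫ x, (Rhat n t x)^2 ∂μ n =
      (Fintype.card (G n) : ℝ)⁻¹ * ∑ g,
        ((Fintype.card (G n) : ℝ)⁻¹ * ∑ g', (μ n (A n g ∩ A n g')).toReal) := by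
    intro n
    haveI := hprob n
    have hind : ∀ (g : G n) (x : 𝒳 n), (if T n (g • x) ≤ t then (1:ℝ) else 0) =
        (A n g).indicator (fun _ => (1:ℝ)) x := by
      intro g x
      simp [Set.indicator_apply, hAdef]
    have hind2 : ∀ (g g' : G n) (x : 𝒳 n),
        (A n g ∩ A n g').indicator (fun _ => (1:ℝ)) x =
          ((A n g).indicator (fun _ => (1:ℝ)) x) * ((A n g').indicator (fun _ => (1:ℝ)) x) := by
      intro g g' x
      by_cases h1 : x ∈ A n g <;> by_cases h2 : x ∈ A n g' <;>
        simp [Set.indicator_apply, h1, h2]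
    have hpt : ∀ x, (Rhat n t x)^2 = (Fintype.card (G n) : ℝ)⁻¹ *
        ∑ g, ((Fintype.card (G n) : ℝ)⁻¹ *
          ∑ g', (A n g ∩ A n g').indicator (fun _ => (1:ℝ)) x) := by
      intro x
      simp only [hRhat, hind, hind2]
      simp only [← Finset.mul_sum, ← Finset.sum_mul]
      ring
    calc ∫ x, (Rhat n t x)^2 ∂μ n
        = ∫ x, (Fintype.card (G n) : ℝ)⁻¹ *
            ∑ g, ((Fintype.card (G n) : ℝ)⁻¹ *
              ∑ g', (A n g ∩ A n g').indicator (fun _ => (1:ℝ)) x) ∂μ n := by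
          congr 1; funext x; exact hpt x
      _ = _ := by
          rw [integral_const_mul, integral_finset_sum _ (fun g _ =>
            (integrable_finset_sum _ (fun g' _ =>
              (integrable_const (1:ℝ)).indicator ((hA n g).inter (hA n g')))).const_mul _)]
          congr 1
          refine Finset.sum_congr rfl fun g _ => ?_
          rw [integral_const_mul, integral_finset_sum _ (fun g' _ =>
            (integrable_const (1:ℝ)).indicator ((hA n g).inter (hA n g')))]
          congr 1
          refine Finset.sum_congr rfl fun g' _ => ?_
          rw [integral_indicator_const (1:ℝ) ((hA n g).inter (hA n g'))]
          simp [Measure.real]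
  -- toReal helper
  have htoReal : ∀ n (m : G n → ℝ≥0∞), (∀ g, m g ≠ ∞) →
      ((Fintype.card (G n) : ℝ≥0∞)⁻¹ * ∑ g, m g).toReal =
        (Fintype.card (G n) : ℝ)⁻¹ * ∑ g, (m g).toReal := by
    intro n m hm
    rw [ENNReal.toReal_mul, ENNReal.toReal_inv, ENNReal.toReal_sum (fun g _ => hm g)]
    simp
  -- weak convergence of pushforwards
  set κ : ℕ → ProbabilityMeasure (ℝ × ℝ) := fun n =>
    ⟨(P n).map (Φ n), by haveI := hPn n; exact Measure.isProbabilityMeasure_map (hΦ n).aemeasurable⟩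
    with hκdef
  set νν : ProbabilityMeasure (ℝ × ℝ) := ⟨ν.prod ν, inferInstance⟩ with hννdef
  have hweak : Tendsto κ atTop (𝓝 νν) := by
    rw [ProbabilityMeasure.tendsto_iff_forall_integral_tendsto]
    intro f
    refine (hconv f).congr fun n => ?_
    haveI := hPn n
    exact (integral_map (hΦ n).aemeasurable f.continuous.measurable.aestronglyMeasurable).symm
  have hatom : ν {t} = 0 := cdf_cont_no_atom ν R hR t ht
  have hbd1 : (ν.prod ν) (frontier (Set.Iic t ×ˢ (Set.univ : Set ℝ))) = 0 := by
    rw [frontier_prod_univ_eq, frontier_Iic, Measure.prod_prod, hatom, zero_mul]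
  have hbd2 : (ν.prod ν) (frontier (Set.Iic t ×ˢ Set.Iic t)) = 0 := by
    rw [frontier_prod_eq, frontier_Iic]
    refine measure_union_null ?_ ?_
    · rw [Measure.prod_prod, hatom, mul_zero]
    · rw [Measure.prod_prod, hatom, zero_mul]
  have htend1 : Tendsto (fun n => ((κ n : Measure (ℝ × ℝ)) (Set.Iic t ×ˢ Set.univ)))
      atTop (𝓝 ((ν.prod ν) (Set.Iic t ×ˢ Set.univ))) :=
    ProbabilityMeasure.tendsto_measure_of_null_frontier_of_tendsto' hweak hbd1
  have htend2 : Tendsto (fun n => ((κ n : Measure (ℝ × ℝ)) (Set.Iic t ×ˢ Set.Iic t)))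
      atTop (𝓝 ((ν.prod ν) (Set.Iic t ×ˢ Set.Iic t))) :=
    ProbabilityMeasure.tendsto_measure_of_null_frontier_of_tendsto' hweak hbd2
  -- convergence of the first moment
  have ha : Tendsto (fun n => ∫ x, Rhat n t x ∂μ n) atTop (𝓝 (R t)) := by
    have h1 := (ENNReal.tendsto_toReal (measure_ne_top (ν.prod ν) _)).comp htend1
    have hlimval : ((ν.prod ν) (Set.Iic t ×ˢ (Set.univ : Set ℝ))).toReal = R t := by
      rw [Measure.prod_prod, measure_univ, mul_one, hR]
    rw [hlimval] at h1
    refine h1.congr fun n => ?_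
    haveI := hprob n; haveI := huGP n; haveI := hPn n
    show ((P n).map (Φ n) (Set.Iic t ×ˢ Set.univ)).toReal = _
    rw [Measure.map_apply (hΦ n) (measurableSet_Iic.prod MeasurableSet.univ),
      hP1 n, htoReal n _ (fun g => measure_ne_top _ _), ← hEa n]
  have hb : Tendsto (fun n => ∫ x, (Rhat n t x)^2 ∂μ n) atTop (𝓝 (R t * R t)) := by
    have h1 := (ENNReal.tendsto_toReal (measure_ne_top (ν.prod ν) _)).comp htend2
    have hlimval : ((ν.prod ν) (Set.Iic t ×ˢ Set.Iic t)).toReal = R t * R t := by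
      rw [Measure.prod_prod, ENNReal.toReal_mul, hR]
    rw [hlimval] at h1
    refine h1.congr fun n => ?_
    haveI := hprob n; haveI := huGP n; haveI := hPn n
    show ((P n).map (Φ n) (Set.Iic t ×ˢ Set.Iic t)).toReal = _
    have hfin : ∀ g : G n,
        (Fintype.card (G n) : ℝ≥0∞)⁻¹ * ∑ g', μ n (A n g ∩ A n g') ≠ ∞ := by
      intro g
      refine ENNReal.mul_ne_top (ENNReal.inv_ne_top.mpr (hcard0 n)) ?_
      exact (ENNReal.sum_lt_top.mpr fun g' _ => (measure_lt_top _ _)).ne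
    rw [Measure.map_apply (hΦ n) (measurableSet_Iic.prod measurableSet_Iic),
      hP2 n, htoReal n _ hfin, hEb n]
    congr 1
    refine Finset.sum_congr rfl fun g _ => ?_
    rw [htoReal n _ (fun g' => measure_ne_top _ _)]
  -- integrability of Rhat
  have hRm : ∀ n, Measurable (Rhat n t) := by
    intro n
    have heq : Rhat n t = fun x => (Fintype.card (G n) : ℝ)⁻¹ *
        ∑ g : G n, if T n (g • x) ≤ t then (1:ℝ) else 0 := funext (hRhat n t)
    rw [heq]
    exact measurable_const.mul (Finset.measurable_sum _ fun g _ =>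
      Measurable.ite (hA n g) measurable_const measurable_const)
  have hRb : ∀ n x, 0 ≤ Rhat n t x ∧ Rhat n t x ≤ 1 := by
    intro n x
    rw [hRhat]
    have hc : (0:ℝ) < Fintype.card (G n) := by exact_mod_cast Fintype.card_pos
    constructor
    · refine mul_nonneg (inv_nonneg.mpr hc.le) (Finset.sum_nonneg fun g _ => ?_)
      split_ifs <;> norm_num
    · have h1 : (∑ g : G n, if T n (g • x) ≤ t then (1:ℝ) else 0) ≤
          (Fintype.card (G n) : ℝ) := by
        calc (∑ g : G n, if T n (g • x) ≤ t then (1:ℝ) else 0)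
            ≤ ∑ _g : G n, (1:ℝ) := Finset.sum_le_sum fun g _ => by split_ifs <;> norm_num
          _ = (Fintype.card (G n) : ℝ) := by simp
      calc (Fintype.card (G n) : ℝ)⁻¹ * (∑ g : G n, if T n (g • x) ≤ t then (1:ℝ) else 0)
          ≤ (Fintype.card (G n) : ℝ)⁻¹ * (Fintype.card (G n) : ℝ) :=
            mul_le_mul_of_nonneg_left h1 (inv_nonneg.mpr hc.le)
        _ = 1 := inv_mul_cancel₀ hc.ne'
  have hint1 : ∀ n, Integrable (Rhat n t) (μ n) := by
    intro n
    haveI := hprob n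
    refine ⟨(hRm n).aestronglyMeasurable, HasFiniteIntegral.of_bounded (C := 1) ?_⟩
    filter_upwards with x
    rw [Real.norm_eq_abs, abs_le]
    constructor <;> [linarith [(hRb n x).1]; exact (hRb n x).2]
  have hint2 : ∀ n, Integrable (fun x => (Rhat n t x)^2) (μ n) := by
    intro n
    haveI := hprob n
    refine ⟨((hRm n).pow_const 2).aestronglyMeasurable,
      HasFiniteIntegral.of_bounded (C := 1) ?_⟩
    filter_upwards with x
    rw [Real.norm_eq_abs, abs_le]
    constructor
    · nlinarith [(hRb n x).1, (hRb n x).2]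
    · nlinarith [(hRb n x).1, (hRb n x).2]
  -- convergence of second moment of the deviation
  have hs : Tendsto (fun n => ∫ x, (Rhat n t x - R t)^2 ∂μ n) atTop (𝓝 0) := by
    have hexp : ∀ n, ∫ x, (Rhat n t x - R t)^2 ∂μ n =
        (∫ x, (Rhat n t x)^2 ∂μ n) - 2 * R t * (∫ x, Rhat n t x ∂μ n) + R t ^ 2 := by
      intro n
      haveI := hprob n
      have : (fun x => (Rhat n t x - R t)^2) =
          fun x => ((Rhat n t x)^2 - 2 * R t * Rhat n t x) + R t ^ 2 := by
        funext x; ring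
      have i1 : Integrable (fun x => Rhat n t x ^ 2 - 2 * R t * Rhat n t x) (μ n) :=
        (hint2 n).sub ((hint1 n).const_mul _)
      rw [this, integral_add i1 (integrable_const _),
        integral_sub (hint2 n) ((hint1 n).const_mul _), integral_const_mul, integral_const]
      simp
    simp only [hexp]
    have : Tendsto (fun n => (∫ x, (Rhat n t x)^2 ∂μ n) - 2 * R t * (∫ x, Rhat n t x ∂μ n)
        + R t ^ 2) atTop (𝓝 ((R t * R t) - 2 * R t * R t + R t ^ 2)) :=
      ((hb.sub (ha.const_mul _)).add tendsto_const_nhds)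
    convert this using 2
    ring
  -- Markov/Chebyshev and conclusion
  have hM : ∀ n, (μ n {x | ε ≤ |Rhat n t x - R t|}).toReal ≤
      (ε^2)⁻¹ * ∫ x, (Rhat n t x - R t)^2 ∂μ n := by
    intro n
    haveI := hprob n
    have hset : {x | ε ≤ |Rhat n t x - R t|} = {x | ε^2 ≤ (Rhat n t x - R t)^2} := by
      ext x
      simp only [Set.mem_setOf_eq]
      rw [sq_le_sq, abs_of_pos hε]
    have hint3 : Integrable (fun x => (Rhat n t x - R t)^2) (μ n) := by
      have : (fun x => (Rhat n t x - R t)^2) =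
          fun x => ((Rhat n t x)^2 - 2 * R t * Rhat n t x) + R t ^ 2 := by
        funext x; ring
      rw [this]
      exact ((hint2 n).sub ((hint1 n).const_mul _)).add (integrable_const _)
    have := mul_meas_ge_le_integral_of_nonneg
      (ae_of_all _ fun x => sq_nonneg (Rhat n t x - R t)) hint3 (ε^2)
    rw [hset]
    have hε2 : (0:ℝ) < ε^2 := by positivity
    rw [inv_mul_eq_div, le_div_iff₀ hε2]
    simp only [Measure.real] at this
    linarith [this]
  have hsq : Tendsto (fun n => (μ n {x | ε ≤ |Rhat n t x - R t|}).toReal) atTop (𝓝 0) := by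
    have hlim : Tendsto (fun n => (ε^2)⁻¹ * ∫ x, (Rhat n t x - R t)^2 ∂μ n) atTop (𝓝 0) := by
      simpa using hs.const_mul (ε^2)⁻¹
    exact squeeze_zero (fun n => ENNReal.toReal_nonneg) hM hlim
  have hfin := ENNReal.tendsto_ofReal hsq
  rw [ENNReal.ofReal_zero] at hfin
  refine hfin.congr fun n => ?_
  haveI := hprob n
  exact ENNReal.ofReal_toReal (measure_ne_top _ _)
end

section
/- (Slutsky's theorem for randomization distributions) Suppose (Tₙ(GₙXⁿ), Tₙ(Gₙ'Xⁿ)) → (T,T') in distribution with T, T' independent with common c.d.f. R, and suppose Aₙ(GₙXⁿ) → a and Bₙ(GₙXⁿ) → b in probability for constants a, b. Then the randomization distribution of AₙTₙ + Bₙ, defined by R̂ₙ^{AT+B}(t) = |Gₙ|⁻¹ Σ_{g} I{Aₙ(gXⁿ)Tₙ(gXⁿ) + Bₙ(gXⁿ) ≤ t}, converges in probability to the c.d.f. of aT + b at every continuity point t of that c.d.f. -/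
open MeasureTheory Filter
open scoped ENNReal BoundedContinuousFunction Topology

namespace SlutskyAux

noncomputable def cl (u : ℝ) : ℝ := max 0 (min 1 u)

lemma cl_nonneg (u : ℝ) : 0 ≤ cl u := le_max_left _ _

lemma cl_le_one (u : ℝ) : cl u ≤ 1 := max_le zero_le_one (min_le_left _ _)

lemma cl_lip (u v : ℝ) : |cl u - cl v| ≤ |u - v| := by
  unfold cl
  rw [max_comm 0 (min 1 u), max_comm 0 (min 1 v)]
  refine (abs_max_sub_max_le_abs _ _ _).trans ?_
  refine (abs_min_sub_min_le_max 1 u 1 v).trans ?_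
  simp

lemma continuous_cl : Continuous cl :=
  continuous_const.max (continuous_const.min continuous_id)

noncomputable def stp (c η s : ℝ) : ℝ := cl ((c + η - s) / η)

lemma stp_nonneg (c η s : ℝ) : 0 ≤ stp c η s := cl_nonneg _
lemma stp_le_one (c η s : ℝ) : stp c η s ≤ 1 := cl_le_one _

lemma continuous_stp (c η : ℝ) : Continuous (stp c η) :=
  continuous_cl.comp (by continuity)

lemma stp_of_le {c η s : ℝ} (hη : 0 < η) (hs : s ≤ c) : stp c η s = 1 := by
  have h1 : (1:ℝ) ≤ (c + η - s) / η := (le_div_iff₀ hη).2 (by linarith)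
  unfold stp cl
  rw [min_eq_left h1, max_eq_right zero_le_one]

lemma stp_of_ge {c η s : ℝ} (hη : 0 < η) (hs : c + η ≤ s) : stp c η s = 0 := by
  have h1 : (c + η - s) / η ≤ 0 := div_nonpos_of_nonpos_of_nonneg (by linarith) hη.le
  unfold stp cl
  rw [min_eq_right (h1.trans zero_le_one), max_eq_left h1]

lemma stp_lip {c η : ℝ} (hη : 0 < η) (s s' : ℝ) :
    |stp c η s - stp c η s'| ≤ η⁻¹ * |s - s'| := by
  refine (cl_lip _ _).trans ?_
  rw [div_sub_div_same, abs_div, abs_of_pos hη]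
  rw [show c + η - s - (c + η - s') = -(s - s') by ring, abs_neg, div_eq_inv_mul]

lemma stp_diff_le_min {c η : ℝ} (hη : 0 < η) (s s' : ℝ) :
    |stp c η s - stp c η s'| ≤ min 1 (η⁻¹ * |s - s'|) := by
  refine le_min (abs_le.2 ⟨?_, ?_⟩) (stp_lip hη s s')
  · linarith [stp_nonneg c η s, stp_le_one c η s']
  · linarith [stp_le_one c η s, stp_nonneg c η s']

lemma ind_le_stp {c η : ℝ} (hη : 0 < η) (s t : ℝ) (h : c = t) :
    (if s ≤ t then (1:ℝ) else 0) ≤ stp c η s := by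
  subst h
  by_cases hs : s ≤ c
  · rw [if_pos hs, stp_of_le hη hs]
  · rw [if_neg hs]; exact stp_nonneg _ _ _

lemma stp_le_ind {c η : ℝ} (hη : 0 < η) (s t : ℝ) (h : c + η = t) :
    stp c η s ≤ (if s ≤ t then (1:ℝ) else 0) := by
  by_cases hs : s ≤ t
  · rw [if_pos hs]; exact stp_le_one _ _ _
  · rw [if_neg hs, stp_of_ge hη (by linarith [not_le.1 hs])]

noncomputable def tail (M s : ℝ) : ℝ := cl (|s| - M)

lemma tail_nonneg (M s : ℝ) : 0 ≤ tail M s := cl_nonneg _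
lemma tail_le_one (M s : ℝ) : tail M s ≤ 1 := cl_le_one _

lemma continuous_tail (M : ℝ) : Continuous (tail M) :=
  continuous_cl.comp (by continuity)

lemma ind_le_tail (M s : ℝ) : (if M + 1 ≤ |s| then (1:ℝ) else 0) ≤ tail M s := by
  by_cases hs : M + 1 ≤ |s|
  · rw [if_pos hs]
    unfold tail cl
    rw [min_eq_left (by linarith), max_eq_right zero_le_one]
  · rw [if_neg hs]; exact tail_nonneg _ _

lemma tail_le_ind (M s : ℝ) : tail M s ≤ (if M ≤ |s| then (1:ℝ) else 0) := by
  by_cases hs : M ≤ |s|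
  · rw [if_pos hs]; exact tail_le_one _ _
  · rw [if_neg hs]
    unfold tail cl
    rw [min_eq_right (by linarith [not_le.1 hs]), max_eq_left (by linarith [not_le.1 hs])]

lemma prod_bound {u v u' v' : ℝ} (hu0 : 0 ≤ u) (hu1 : u ≤ 1) (hv'0 : 0 ≤ v') (hv'1 : v' ≤ 1) :
    u * v ≤ u' * v' + |u - u'| + |v - v'| := by
  have h1 := le_abs_self (u - u')
  have h2 := le_abs_self (v - v')
  nlinarith [abs_nonneg (u - u'), abs_nonneg (v - v')]

lemma integrable_of_bound {α : Type*} [MeasurableSpace α] (P : Measure α) [IsFiniteMeasure P]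
    {F : α → ℝ} (hF : Measurable F) (C : ℝ) (h : ∀ ω, |F ω| ≤ C) : Integrable F P :=
  ⟨hF.aestronglyMeasurable, HasFiniteIntegral.of_bounded (C := C)
    (ae_of_all _ (by simpa [Real.norm_eq_abs] using h))⟩

lemma measurable_ite_le {α : Type*} [MeasurableSpace α] {f g : α → ℝ}
    (hf : Measurable f) (hg : Measurable g) :
    Measurable (fun x => if f x ≤ g x then (1:ℝ) else 0) :=
  Measurable.ite (measurableSet_le hf hg) measurable_const measurable_const

lemma abs_ite_le {p : Prop} [Decidable p] : |if p then (1:ℝ) else 0| ≤ 1 := by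
  split <;> simp

lemma ite_nonneg' {p : Prop} [Decidable p] : (0:ℝ) ≤ if p then (1:ℝ) else 0 := by
  split <;> simp

lemma ite_le_one' {p : Prop} [Decidable p] : (if p then (1:ℝ) else 0) ≤ 1 := by
  split <;> simp

/-- The core analytic lemma: Slutsky-type sandwich argument. -/
lemma core
    {Ω : ℕ → Type*} [∀ n, MeasurableSpace (Ω n)]
    (P : ∀ n, Measure (Ω n)) [∀ n, IsProbabilityMeasure (P n)]
    (T1 T2 A1 A2 B1 B2 : ∀ n, Ω n → ℝ)
    (mT1 : ∀ n, Measurable (T1 n)) (mT2 : ∀ n, Measurable (T2 n))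
    (mA1 : ∀ n, Measurable (A1 n)) (mA2 : ∀ n, Measurable (A2 n))
    (mB1 : ∀ n, Measurable (B1 n)) (mB2 : ∀ n, Measurable (B2 n))
    (ν : Measure ℝ) [IsProbabilityMeasure ν] (a b t : ℝ)
    (hconv : ∀ f : (ℝ × ℝ) →ᵇ ℝ,
      Tendsto (fun n => ∫ ω, f (T1 n ω, T2 n ω) ∂P n) atTop (𝓝 (∫ p, f p ∂(ν.prod ν))))
    (hA1c : ∀ δ > (0:ℝ), Tendsto
      (fun n => ∫ ω, (if δ ≤ |A1 n ω - a| then (1:ℝ) else 0) ∂P n) atTop (𝓝 0))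
    (hA2c : ∀ δ > (0:ℝ), Tendsto
      (fun n => ∫ ω, (if δ ≤ |A2 n ω - a| then (1:ℝ) else 0) ∂P n) atTop (𝓝 0))
    (hB1c : ∀ δ > (0:ℝ), Tendsto
      (fun n => ∫ ω, (if δ ≤ |B1 n ω - b| then (1:ℝ) else 0) ∂P n) atTop (𝓝 0))
    (hB2c : ∀ δ > (0:ℝ), Tendsto
      (fun n => ∫ ω, (if δ ≤ |B2 n ω - b| then (1:ℝ) else 0) ∂P n) atTop (𝓝 0))
    (RaTb : ℝ → ℝ) (hRaTb : ∀ u, RaTb u = ((ν.map fun s => a * s + b) (Set.Iic u)).toReal)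
    (hct : ContinuousAt RaTb t) :
    Tendsto (fun n => ∫ ω, (if A1 n ω * T1 n ω + B1 n ω ≤ t then (1:ℝ) else 0) *
        (if A2 n ω * T2 n ω + B2 n ω ≤ t then (1:ℝ) else 0) ∂P n) atTop (𝓝 (RaTb t ^ 2)) ∧
    Tendsto (fun n => ∫ ω, (if A1 n ω * T1 n ω + B1 n ω ≤ t then (1:ℝ) else 0) ∂P n)
      atTop (𝓝 (RaTb t)) := by
  -- measurability of the basic processes
  have mY1 : ∀ n, Measurable (fun ω => A1 n ω * T1 n ω + B1 n ω) :=
    fun n => ((mA1 n).mul (mT1 n)).add (mB1 n)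
  have mY2 : ∀ n, Measurable (fun ω => A2 n ω * T2 n ω + B2 n ω) :=
    fun n => ((mA2 n).mul (mT2 n)).add (mB2 n)
  have mZ1 : ∀ n, Measurable (fun ω => a * T1 n ω + b) :=
    fun n => (measurable_const.mul (mT1 n)).add measurable_const
  have mZ2 : ∀ n, Measurable (fun ω => a * T2 n ω + b) :=
    fun n => (measurable_const.mul (mT2 n)).add measurable_const
  have hmapply : ∀ u : ℝ, (ν.map fun s => a * s + b) (Set.Iic u) = ν {s : ℝ | a * s + b ≤ u} := by
    intro u
    rw [Measure.map_apply (by fun_prop) measurableSet_Iic]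
    rfl
  have hmble : ∀ u : ℝ, MeasurableSet {s : ℝ | a * s + b ≤ u} :=
    fun u => measurableSet_le (by fun_prop) measurable_const
  have hInd : ∀ u : ℝ, ∫ s, (if a * s + b ≤ u then (1:ℝ) else 0) ∂ν = RaTb u := by
    intro u
    have h1 : (fun s : ℝ => if a * s + b ≤ u then (1:ℝ) else 0)
        = fun s => Set.indicator {s : ℝ | a * s + b ≤ u} 1 s := by
      ext s; simp [Set.indicator_apply]
    rw [h1, integral_indicator_one (hmble u), hRaTb u, hmapply u]
    rfl
  have hR01 : ∀ u : ℝ, 0 ≤ RaTb u ∧ RaTb u ≤ 1 := by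
    intro u
    refine ⟨by rw [hRaTb]; exact ENNReal.toReal_nonneg, ?_⟩
    rw [hRaTb u, hmapply u]
    simpa using ENNReal.toReal_mono ENNReal.one_ne_top prob_le_one
  -- the error machine
  have herr : ∀ η > (0:ℝ), ∀ κ > (0:ℝ), ∀ᶠ n in atTop,
      (∫ ω, min 1 (η⁻¹ * |(A1 n ω * T1 n ω + B1 n ω) - (a * T1 n ω + b)|) ∂P n) < κ ∧
      (∫ ω, min 1 (η⁻¹ * |(A2 n ω * T2 n ω + B2 n ω) - (a * T2 n ω + b)|) ∂P n) < κ := by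
    intro η hη κ hκ
    obtain ⟨M, hM0, hMν⟩ : ∃ M : ℝ, 0 ≤ M ∧ (ν {s : ℝ | M ≤ |s|}).toReal < κ / 8 := by
      have hiter : Tendsto (fun m : ℕ => ν {s : ℝ | (m : ℝ) ≤ |s|}) atTop (𝓝 0) := by
        have hempty : (⋂ m : ℕ, {s : ℝ | (m : ℝ) ≤ |s|}) = ∅ := by
          ext s
          simp only [Set.mem_iInter, Set.mem_setOf_eq, Set.mem_empty_iff_false, iff_false,
            not_forall, not_le]
          obtain ⟨m, hm⟩ := exists_nat_gt |s|
          exact ⟨m, hm⟩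
        have h := tendsto_measure_iInter_atTop (μ := ν)
          (s := fun m : ℕ => {s : ℝ | (m : ℝ) ≤ |s|})
          (fun m => (measurableSet_le measurable_const (by fun_prop)).nullMeasurableSet)
          (fun i j hij s hs => by
            simp only [Set.mem_setOf_eq] at hs ⊢
            exact le_trans (by exact_mod_cast hij) hs)
          ⟨0, measure_ne_top ν _⟩
        rwa [hempty, measure_empty] at h
      have hev := hiter.eventually_lt_const
        (show (0:ℝ≥0∞) < ENNReal.ofReal (κ / 8) by
          rw [ENNReal.ofReal_pos]; linarith)
      obtain ⟨m, hm⟩ := hev.exists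
      exact ⟨m, Nat.cast_nonneg m,
        (ENNReal.lt_ofReal_iff_toReal_lt (measure_ne_top ν _)).1 hm⟩
    have htailν : ∫ s, tail M s ∂ν ≤ (ν {s : ℝ | M ≤ |s|}).toReal := by
      have h1 : (fun s : ℝ => if M ≤ |s| then (1:ℝ) else 0)
          = fun s => Set.indicator {s : ℝ | M ≤ |s|} 1 s := by
        ext s; simp [Set.indicator_apply]
      calc ∫ s, tail M s ∂ν ≤ ∫ s, (if M ≤ |s| then (1:ℝ) else 0) ∂ν := by
            refine integral_mono
              (integrable_of_bound ν (continuous_tail M).measurable 1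
                (fun s => abs_le.2 ⟨by linarith [tail_nonneg M s], tail_le_one M s⟩))
              (integrable_of_bound ν (measurable_ite_le measurable_const (by fun_prop)) 1
                (fun s => abs_ite_le))
              (fun s => tail_le_ind M s)
        _ = (ν {s : ℝ | M ≤ |s|}).toReal := by
            rw [h1, integral_indicator_one (measurableSet_le measurable_const (by fun_prop))]
            rfl
    -- tail bounds for the two coordinates
    have hev1 : ∀ᶠ n in atTop, ∫ ω, tail M (T1 n ω) ∂P n < κ / 4 := by
      set F : (ℝ × ℝ) →ᵇ ℝ := BoundedContinuousFunction.ofNormedAddCommGroup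
        (fun p => tail M p.1) ((continuous_tail M).comp continuous_fst) 1
        (fun p => by
          rw [Real.norm_eq_abs, abs_of_nonneg (tail_nonneg _ _)]; exact tail_le_one _ _) with hF
      have h := hconv F
      have hcoe : ∀ p : ℝ × ℝ, F p = tail M p.1 := fun p => rfl
      simp only [hcoe] at h
      have hlim : ∫ p : ℝ × ℝ, tail M p.1 ∂(ν.prod ν) = ∫ s, tail M s ∂ν := by
        have h2 : (fun p : ℝ × ℝ => tail M p.1)
            = fun p : ℝ × ℝ => tail M p.1 * (fun _ : ℝ => (1:ℝ)) p.2 := by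
          funext p; simp
        rw [h2, integral_prod_mul (μ := ν) (ν := ν) (fun s => tail M s) (fun _ : ℝ => (1:ℝ))]
        simp
      rw [hlim] at h
      exact h.eventually_lt_const (by linarith)
    have hev2 : ∀ᶠ n in atTop, ∫ ω, tail M (T2 n ω) ∂P n < κ / 4 := by
      set F : (ℝ × ℝ) →ᵇ ℝ := BoundedContinuousFunction.ofNormedAddCommGroup
        (fun p => tail M p.2) ((continuous_tail M).comp continuous_snd) 1
        (fun p => by
          rw [Real.norm_eq_abs, abs_of_nonneg (tail_nonneg _ _)]; exact tail_le_one _ _) with hF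
      have h := hconv F
      have hcoe : ∀ p : ℝ × ℝ, F p = tail M p.2 := fun p => rfl
      simp only [hcoe] at h
      have hlim : ∫ p : ℝ × ℝ, tail M p.2 ∂(ν.prod ν) = ∫ s, tail M s ∂ν := by
        have h2 : (fun p : ℝ × ℝ => tail M p.2)
            = fun p : ℝ × ℝ => (fun _ : ℝ => (1:ℝ)) p.1 * tail M p.2 := by
          funext p; simp
        rw [h2, integral_prod_mul (μ := ν) (ν := ν) (fun _ : ℝ => (1:ℝ)) (fun s => tail M s)]
        simp
      rw [hlim] at h
      exact h.eventually_lt_const (by linarith)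
    set δ := κ / 8 * η / (M + 2) with hδdef
    have hδ : 0 < δ := div_pos (mul_pos (by linarith) hη) (by linarith)
    have hδb : η⁻¹ * (δ * (M + 2)) = κ / 8 := by
      rw [hδdef]
      field_simp
    have hevA1 := (hA1c δ hδ).eventually_lt_const (show (0:ℝ) < κ / 4 by linarith)
    have hevB1 := (hB1c δ hδ).eventually_lt_const (show (0:ℝ) < κ / 4 by linarith)
    have hevA2 := (hA2c δ hδ).eventually_lt_const (show (0:ℝ) < κ / 4 by linarith)
    have hevB2 := (hB2c δ hδ).eventually_lt_const (show (0:ℝ) < κ / 4 by linarith)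
    filter_upwards [hev1, hev2, hevA1, hevB1, hevA2, hevB2] with n e1 e2 a1 b1 a2 b2
    have main : ∀ (Tn An Bn : Ω n → ℝ), Measurable Tn → Measurable An → Measurable Bn →
        (∫ ω, (if δ ≤ |An ω - a| then (1:ℝ) else 0) ∂P n) < κ / 4 →
        (∫ ω, (if δ ≤ |Bn ω - b| then (1:ℝ) else 0) ∂P n) < κ / 4 →
        (∫ ω, tail M (Tn ω) ∂P n) < κ / 4 →
        (∫ ω, min 1 (η⁻¹ * |(An ω * Tn ω + Bn ω) - (a * Tn ω + b)|) ∂P n) < κ := by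
      intro Tn An Bn mTn mAn mBn hAn hBn hTn
      have hpw : ∀ ω, min 1 (η⁻¹ * |(An ω * Tn ω + Bn ω) - (a * Tn ω + b)|)
          ≤ ((if δ ≤ |An ω - a| then (1:ℝ) else 0) + (if δ ≤ |Bn ω - b| then (1:ℝ) else 0)
            + tail M (Tn ω)) + κ / 8 := by
        intro ω
        have t0 := tail_nonneg M (Tn ω)
        have i1 : (0:ℝ) ≤ if δ ≤ |An ω - a| then (1:ℝ) else 0 := ite_nonneg'
        have i2 : (0:ℝ) ≤ if δ ≤ |Bn ω - b| then (1:ℝ) else 0 := ite_nonneg'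
        by_cases hA : δ ≤ |An ω - a|
        · have := min_le_left 1 (η⁻¹ * |(An ω * Tn ω + Bn ω) - (a * Tn ω + b)|)
          rw [if_pos hA]; linarith
        by_cases hB : δ ≤ |Bn ω - b|
        · have := min_le_left 1 (η⁻¹ * |(An ω * Tn ω + Bn ω) - (a * Tn ω + b)|)
          rw [if_pos hB]; linarith
        by_cases hT : M + 1 ≤ |Tn ω|
        · have h1 : (1:ℝ) ≤ tail M (Tn ω) := by
            have := ind_le_tail M (Tn ω); rwa [if_pos hT] at this
          have := min_le_left 1 (η⁻¹ * |(An ω * Tn ω + Bn ω) - (a * Tn ω + b)|)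
          linarith
        · push_neg at hA hB hT
          have hd : |(An ω * Tn ω + Bn ω) - (a * Tn ω + b)| ≤ δ * (M + 2) := by
            have heq : (An ω * Tn ω + Bn ω) - (a * Tn ω + b)
                = (An ω - a) * Tn ω + (Bn ω - b) := by ring
            rw [heq]
            calc |(An ω - a) * Tn ω + (Bn ω - b)|
                ≤ |An ω - a| * |Tn ω| + |Bn ω - b| := by
                  refine (abs_add_le _ _).trans ?_
                  rw [abs_mul]
              _ ≤ δ * (M + 1) + δ :=
                  add_le_add (mul_le_mul hA.le hT.le (abs_nonneg _) hδ.le) hB.le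
              _ = δ * (M + 2) := by ring
          have h2 : η⁻¹ * |(An ω * Tn ω + Bn ω) - (a * Tn ω + b)| ≤ κ / 8 := by
            rw [← hδb]
            exact mul_le_mul_of_nonneg_left hd (inv_nonneg.2 hη.le)
          have := min_le_right 1 (η⁻¹ * |(An ω * Tn ω + Bn ω) - (a * Tn ω + b)|)
          linarith
      have mmin : Measurable (fun ω =>
          min 1 (η⁻¹ * |(An ω * Tn ω + Bn ω) - (a * Tn ω + b)|)) := by fun_prop
      have habs : ∀ ω, |min 1 (η⁻¹ * |(An ω * Tn ω + Bn ω) - (a * Tn ω + b)|)| ≤ 1 := by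
        intro ω
        rw [abs_of_nonneg (le_min zero_le_one (by positivity))]
        exact min_le_left _ _
      have iA : Integrable (fun ω => if δ ≤ |An ω - a| then (1:ℝ) else 0) (P n) :=
        integrable_of_bound (P n) (measurable_ite_le measurable_const (by fun_prop)) 1
          (fun ω => abs_ite_le)
      have iB : Integrable (fun ω => if δ ≤ |Bn ω - b| then (1:ℝ) else 0) (P n) :=
        integrable_of_bound (P n) (measurable_ite_le measurable_const (by fun_prop)) 1
          (fun ω => abs_ite_le)
      have iT : Integrable (fun ω => tail M (Tn ω)) (P n) :=
        integrable_of_bound (P n) ((continuous_tail M).measurable.comp mTn) 1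
          (fun ω => abs_le.2 ⟨by linarith [tail_nonneg M (Tn ω)], tail_le_one _ _⟩)
      have iAB : Integrable (fun ω => (if δ ≤ |An ω - a| then (1:ℝ) else 0)
          + (if δ ≤ |Bn ω - b| then (1:ℝ) else 0)) (P n) := iA.add iB
      have iABT : Integrable (fun ω => ((if δ ≤ |An ω - a| then (1:ℝ) else 0)
          + (if δ ≤ |Bn ω - b| then (1:ℝ) else 0)) + tail M (Tn ω)) (P n) := iAB.add iT
      calc ∫ ω, min 1 (η⁻¹ * |(An ω * Tn ω + Bn ω) - (a * Tn ω + b)|) ∂P n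
          ≤ ∫ ω, (((if δ ≤ |An ω - a| then (1:ℝ) else 0) + (if δ ≤ |Bn ω - b| then (1:ℝ) else 0)
              + tail M (Tn ω)) + κ / 8) ∂P n := by
            refine integral_mono (integrable_of_bound (P n) mmin 1 habs) ?_ hpw
            exact iABT.add (integrable_const _)
        _ = (∫ ω, (if δ ≤ |An ω - a| then (1:ℝ) else 0) ∂P n)
            + (∫ ω, (if δ ≤ |Bn ω - b| then (1:ℝ) else 0) ∂P n)
            + (∫ ω, tail M (Tn ω) ∂P n) + κ / 8 := by
            rw [integral_add iABT (integrable_const _),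
              integral_add iAB iT, integral_add iA iB, integral_const]
            simp
        _ < κ / 4 + κ / 4 + κ / 4 + κ / 8 := by linarith
        _ ≤ κ := by linarith
    exact ⟨main (T1 n) (A1 n) (B1 n) (mT1 n) (mA1 n) (mB1 n) a1 b1 e1,
      main (T2 n) (A2 n) (B2 n) (mT2 n) (mA2 n) (mB2 n) a2 b2 e2⟩
  -- weak convergence through test functions of the "Z" processes
  have hHZ : ∀ ψ : ℝ → ℝ, Continuous ψ → (∀ s, 0 ≤ ψ s) → (∀ s, ψ s ≤ 1) →
      Tendsto (fun n => ∫ ω, ψ (a * T1 n ω + b) * ψ (a * T2 n ω + b) ∂P n) atTop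
        (𝓝 ((∫ s, ψ (a * s + b) ∂ν) ^ 2)) ∧
      Tendsto (fun n => ∫ ω, ψ (a * T1 n ω + b) ∂P n) atTop (𝓝 (∫ s, ψ (a * s + b) ∂ν)) := by
    intro ψ hc h0 h1
    have hb : ∀ s, ‖ψ s‖ ≤ 1 := fun s => by
      rw [Real.norm_eq_abs, abs_of_nonneg (h0 s)]; exact h1 s
    constructor
    · set F : (ℝ × ℝ) →ᵇ ℝ := BoundedContinuousFunction.ofNormedAddCommGroup
        (fun p => ψ (a * p.1 + b) * ψ (a * p.2 + b))
        ((hc.comp ((continuous_const.mul continuous_fst).add continuous_const)).mul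
          (hc.comp ((continuous_const.mul continuous_snd).add continuous_const))) 1
        (fun p => by
          rw [Real.norm_eq_abs, abs_mul]
          exact mul_le_one₀ (by rw [abs_of_nonneg (h0 _)]; exact h1 _) (abs_nonneg _)
            (by rw [abs_of_nonneg (h0 _)]; exact h1 _)) with hF
      have h := hconv F
      have hcoe : ∀ p : ℝ × ℝ, F p = ψ (a * p.1 + b) * ψ (a * p.2 + b) := fun p => rfl
      simp only [hcoe] at h
      have hlim : ∫ p : ℝ × ℝ, ψ (a * p.1 + b) * ψ (a * p.2 + b) ∂(ν.prod ν)
          = (∫ s, ψ (a * s + b) ∂ν) ^ 2 := by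
        rw [integral_prod_mul (μ := ν) (ν := ν) (fun s => ψ (a * s + b))
          (fun s => ψ (a * s + b)), sq]
      rwa [hlim] at h
    · set F : (ℝ × ℝ) →ᵇ ℝ := BoundedContinuousFunction.ofNormedAddCommGroup
        (fun p => ψ (a * p.1 + b))
        (hc.comp ((continuous_const.mul continuous_fst).add continuous_const)) 1
        (fun p => hb _) with hF
      have h := hconv F
      have hcoe : ∀ p : ℝ × ℝ, F p = ψ (a * p.1 + b) := fun p => rfl
      simp only [hcoe] at h
      have hlim : ∫ p : ℝ × ℝ, ψ (a * p.1 + b) ∂(ν.prod ν) = ∫ s, ψ (a * s + b) ∂ν := by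
        have h2 : (fun p : ℝ × ℝ => ψ (a * p.1 + b))
            = fun p : ℝ × ℝ => ψ (a * p.1 + b) * (fun _ : ℝ => (1:ℝ)) p.2 := by
          funext p; simp
        rw [h2, integral_prod_mul (μ := ν) (ν := ν) (fun s => ψ (a * s + b))
          (fun _ : ℝ => (1:ℝ))]
        simp
      rwa [hlim] at h
  -- integrability helpers for the main estimates
  have iY1 : ∀ n, Integrable (fun ω => if A1 n ω * T1 n ω + B1 n ω ≤ t then (1:ℝ) else 0)
      (P n) := fun n =>
    integrable_of_bound (P n) (measurable_ite_le (mY1 n) measurable_const) 1 (fun _ => abs_ite_le)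
  have iY2 : ∀ n, Integrable (fun ω => if A2 n ω * T2 n ω + B2 n ω ≤ t then (1:ℝ) else 0)
      (P n) := fun n =>
    integrable_of_bound (P n) (measurable_ite_le (mY2 n) measurable_const) 1 (fun _ => abs_ite_le)
  have iY12 : ∀ n, Integrable (fun ω => (if A1 n ω * T1 n ω + B1 n ω ≤ t then (1:ℝ) else 0) *
      (if A2 n ω * T2 n ω + B2 n ω ≤ t then (1:ℝ) else 0)) (P n) := fun n =>
    integrable_of_bound (P n)
      ((measurable_ite_le (mY1 n) measurable_const).mul
        (measurable_ite_le (mY2 n) measurable_const)) 1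
      (fun ω => by rw [abs_mul]
                   exact mul_le_one₀ abs_ite_le (abs_nonneg _) abs_ite_le)
  have imin1 : ∀ n (η : ℝ), 0 < η → Integrable (fun ω =>
      min 1 (η⁻¹ * |(A1 n ω * T1 n ω + B1 n ω) - (a * T1 n ω + b)|)) (P n) := by
    intro n η hη
    refine integrable_of_bound (P n) (by fun_prop) 1 (fun ω => ?_)
    rw [abs_of_nonneg (le_min zero_le_one (by positivity))]
    exact min_le_left _ _
  have imin2 : ∀ n (η : ℝ), 0 < η → Integrable (fun ω =>
      min 1 (η⁻¹ * |(A2 n ω * T2 n ω + B2 n ω) - (a * T2 n ω + b)|)) (P n) := by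
    intro n η hη
    refine integrable_of_bound (P n) (by fun_prop) 1 (fun ω => ?_)
    rw [abs_of_nonneg (le_min zero_le_one (by positivity))]
    exact min_le_left _ _
  have istp : ∀ n (c η : ℝ), Integrable (fun ω => stp c η (a * T1 n ω + b) *
      stp c η (a * T2 n ω + b)) (P n) := by
    intro n c η
    refine integrable_of_bound (P n)
      (((continuous_stp c η).measurable.comp (mZ1 n)).mul
        ((continuous_stp c η).measurable.comp (mZ2 n))) 1 (fun ω => ?_)
    rw [abs_mul]
    refine mul_le_one₀ ?_ (abs_nonneg _) ?_ <;>
      · rw [abs_of_nonneg (stp_nonneg _ _ _)]; exact stp_le_one _ _ _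
  have istp1 : ∀ n (c η : ℝ), Integrable (fun ω => stp c η (a * T1 n ω + b)) (P n) := by
    intro n c η
    refine integrable_of_bound (P n) ((continuous_stp c η).measurable.comp (mZ1 n)) 1
      (fun ω => ?_)
    rw [abs_of_nonneg (stp_nonneg _ _ _)]; exact stp_le_one _ _ _
  have intν : ∀ (c η : ℝ), 0 < η → Integrable (fun s => stp c η (a * s + b)) ν := by
    intro c η hη
    refine integrable_of_bound ν ((continuous_stp c η).measurable.comp (by fun_prop)) 1
      (fun s => ?_)
    rw [abs_of_nonneg (stp_nonneg _ _ _)]; exact stp_le_one _ _ _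
  have intνind : ∀ u : ℝ, Integrable (fun s => if a * s + b ≤ u then (1:ℝ) else 0) ν :=
    fun u => integrable_of_bound ν (measurable_ite_le (by fun_prop) measurable_const) 1
      (fun s => abs_ite_le)
  have hR0 : 0 ≤ RaTb t := (hR01 t).1
  have hR1 : RaTb t ≤ 1 := (hR01 t).2
  constructor
  · -- the pair limit
    rw [Metric.tendsto_nhds]
    intro κ hκ
    set κ₁ := min (κ / 8) 1 with hκ₁def
    have hκ₁ : 0 < κ₁ := lt_min (by linarith) one_pos
    have hκ₁le : κ₁ ≤ κ / 8 := min_le_left _ _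
    have hκ₁1 : κ₁ ≤ 1 := min_le_right _ _
    obtain ⟨η₀, hη₀, hct'⟩ := Metric.continuousAt_iff.1 hct κ₁ hκ₁
    set η := η₀ / 2 with hηdef
    have hη : 0 < η := by positivity
    have hup : |RaTb (t + η) - RaTb t| < κ₁ := by
      have h := hct' (x := t + η) (by
        rw [Real.dist_eq, show t + η - t = η by ring, abs_of_pos hη]; linarith)
      rwa [Real.dist_eq] at h
    have hdn : |RaTb (t - η) - RaTb t| < κ₁ := by
      have h := hct' (x := t - η) (by
        rw [Real.dist_eq, show t - η - t = -η by ring, abs_neg, abs_of_pos hη]; linarith)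
      rwa [Real.dist_eq] at h
    have hHZu := (hHZ (stp t η) (continuous_stp t η) (fun s => stp_nonneg t η s)
      (fun s => stp_le_one t η s)).1
    have hHZl := (hHZ (stp (t - η) η) (continuous_stp (t - η) η)
      (fun s => stp_nonneg (t - η) η s) (fun s => stp_le_one (t - η) η s)).1
    set L := ∫ s, stp t η (a * s + b) ∂ν with hLdef
    set L' := ∫ s, stp (t - η) η (a * s + b) ∂ν with hL'def
    have hL0 : 0 ≤ L := integral_nonneg (fun s => stp_nonneg _ _ _)
    have hL'0 : 0 ≤ L' := integral_nonneg (fun s => stp_nonneg _ _ _)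
    have hLle : L ≤ RaTb (t + η) := by
      rw [← hInd (t + η)]
      exact integral_mono (intν t η hη) (intνind _)
        (fun s => stp_le_ind hη _ _ (by ring))
    have hL'ge : RaTb (t - η) ≤ L' := by
      rw [← hInd (t - η)]
      exact integral_mono (intνind _) (intν (t - η) η hη)
        (fun s => ind_le_stp hη _ _ rfl)
    have hev1 := hHZu.eventually_lt_const (show L ^ 2 < L ^ 2 + κ₁ by linarith)
    have hev2 := hHZl.eventually_const_lt (show L' ^ 2 - κ₁ < L' ^ 2 by linarith)
    have hev3 := herr η hη κ₁ hκ₁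
    filter_upwards [hev1, hev2, hev3] with n h1 h2 h3
    obtain ⟨h3a, h3b⟩ := h3
    -- upper bound
    have iSM1 : Integrable (fun ω => stp t η (a * T1 n ω + b) * stp t η (a * T2 n ω + b)
        + min 1 (η⁻¹ * |(A1 n ω * T1 n ω + B1 n ω) - (a * T1 n ω + b)|)) (P n) :=
      (istp n t η).add (imin1 n η hη)
    have iSM12 : Integrable (fun ω => (stp t η (a * T1 n ω + b) * stp t η (a * T2 n ω + b)
        + min 1 (η⁻¹ * |(A1 n ω * T1 n ω + B1 n ω) - (a * T1 n ω + b)|))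
        + min 1 (η⁻¹ * |(A2 n ω * T2 n ω + B2 n ω) - (a * T2 n ω + b)|)) (P n) :=
      iSM1.add (imin2 n η hη)
    have key_up : (∫ ω, (if A1 n ω * T1 n ω + B1 n ω ≤ t then (1:ℝ) else 0) *
          (if A2 n ω * T2 n ω + B2 n ω ≤ t then (1:ℝ) else 0) ∂P n)
        ≤ (∫ ω, stp t η (a * T1 n ω + b) * stp t η (a * T2 n ω + b) ∂P n)
          + (∫ ω, min 1 (η⁻¹ * |(A1 n ω * T1 n ω + B1 n ω) - (a * T1 n ω + b)|) ∂P n)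
          + (∫ ω, min 1 (η⁻¹ * |(A2 n ω * T2 n ω + B2 n ω) - (a * T2 n ω + b)|) ∂P n) := by
      have hpw : ∀ ω, (if A1 n ω * T1 n ω + B1 n ω ≤ t then (1:ℝ) else 0) *
          (if A2 n ω * T2 n ω + B2 n ω ≤ t then (1:ℝ) else 0)
          ≤ (stp t η (a * T1 n ω + b) * stp t η (a * T2 n ω + b)
            + min 1 (η⁻¹ * |(A1 n ω * T1 n ω + B1 n ω) - (a * T1 n ω + b)|))
            + min 1 (η⁻¹ * |(A2 n ω * T2 n ω + B2 n ω) - (a * T2 n ω + b)|) := by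
        intro ω
        have s1 : (if A1 n ω * T1 n ω + B1 n ω ≤ t then (1:ℝ) else 0)
            ≤ stp t η (A1 n ω * T1 n ω + B1 n ω) := ind_le_stp hη _ _ rfl
        have s2 : (if A2 n ω * T2 n ω + B2 n ω ≤ t then (1:ℝ) else 0)
            ≤ stp t η (A2 n ω * T2 n ω + B2 n ω) := ind_le_stp hη _ _ rfl
        have q1 : (if A1 n ω * T1 n ω + B1 n ω ≤ t then (1:ℝ) else 0) *
            (if A2 n ω * T2 n ω + B2 n ω ≤ t then (1:ℝ) else 0)
            ≤ stp t η (A1 n ω * T1 n ω + B1 n ω) * stp t η (A2 n ω * T2 n ω + B2 n ω) :=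
          mul_le_mul s1 s2 ite_nonneg' (stp_nonneg _ _ _)
        have q2 := prod_bound (u := stp t η (A1 n ω * T1 n ω + B1 n ω))
          (v := stp t η (A2 n ω * T2 n ω + B2 n ω))
          (u' := stp t η (a * T1 n ω + b)) (v' := stp t η (a * T2 n ω + b))
          (stp_nonneg _ _ _) (stp_le_one _ _ _) (stp_nonneg _ _ _) (stp_le_one _ _ _)
        have d1 : |stp t η (A1 n ω * T1 n ω + B1 n ω) - stp t η (a * T1 n ω + b)|
            ≤ min 1 (η⁻¹ * |(A1 n ω * T1 n ω + B1 n ω) - (a * T1 n ω + b)|) :=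
          stp_diff_le_min hη _ _
        have d2 : |stp t η (A2 n ω * T2 n ω + B2 n ω) - stp t η (a * T2 n ω + b)|
            ≤ min 1 (η⁻¹ * |(A2 n ω * T2 n ω + B2 n ω) - (a * T2 n ω + b)|) :=
          stp_diff_le_min hη _ _
        linarith
      calc (∫ ω, (if A1 n ω * T1 n ω + B1 n ω ≤ t then (1:ℝ) else 0) *
            (if A2 n ω * T2 n ω + B2 n ω ≤ t then (1:ℝ) else 0) ∂P n)
          ≤ ∫ ω, ((stp t η (a * T1 n ω + b) * stp t η (a * T2 n ω + b)
            + min 1 (η⁻¹ * |(A1 n ω * T1 n ω + B1 n ω) - (a * T1 n ω + b)|))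
            + min 1 (η⁻¹ * |(A2 n ω * T2 n ω + B2 n ω) - (a * T2 n ω + b)|)) ∂P n :=
            integral_mono (iY12 n) iSM12 hpw
        _ = _ := by
            rw [integral_add iSM1 (imin2 n η hη), integral_add (istp n t η) (imin1 n η hη)]
    -- lower bound
    have iSM1' : Integrable (fun ω =>
        (if A1 n ω * T1 n ω + B1 n ω ≤ t then (1:ℝ) else 0) *
          (if A2 n ω * T2 n ω + B2 n ω ≤ t then (1:ℝ) else 0)
        + min 1 (η⁻¹ * |(A1 n ω * T1 n ω + B1 n ω) - (a * T1 n ω + b)|)) (P n) :=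
      (iY12 n).add (imin1 n η hη)
    have iSM12' : Integrable (fun ω =>
        ((if A1 n ω * T1 n ω + B1 n ω ≤ t then (1:ℝ) else 0) *
          (if A2 n ω * T2 n ω + B2 n ω ≤ t then (1:ℝ) else 0)
        + min 1 (η⁻¹ * |(A1 n ω * T1 n ω + B1 n ω) - (a * T1 n ω + b)|))
        + min 1 (η⁻¹ * |(A2 n ω * T2 n ω + B2 n ω) - (a * T2 n ω + b)|)) (P n) :=
      iSM1'.add (imin2 n η hη)
    have key_dn : (∫ ω, stp (t - η) η (a * T1 n ω + b) * stp (t - η) η (a * T2 n ω + b) ∂P n)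
        ≤ (∫ ω, (if A1 n ω * T1 n ω + B1 n ω ≤ t then (1:ℝ) else 0) *
            (if A2 n ω * T2 n ω + B2 n ω ≤ t then (1:ℝ) else 0) ∂P n)
          + (∫ ω, min 1 (η⁻¹ * |(A1 n ω * T1 n ω + B1 n ω) - (a * T1 n ω + b)|) ∂P n)
          + (∫ ω, min 1 (η⁻¹ * |(A2 n ω * T2 n ω + B2 n ω) - (a * T2 n ω + b)|) ∂P n) := by
      have hpw : ∀ ω, stp (t - η) η (a * T1 n ω + b) * stp (t - η) η (a * T2 n ω + b)
          ≤ ((if A1 n ω * T1 n ω + B1 n ω ≤ t then (1:ℝ) else 0) *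
              (if A2 n ω * T2 n ω + B2 n ω ≤ t then (1:ℝ) else 0)
            + min 1 (η⁻¹ * |(A1 n ω * T1 n ω + B1 n ω) - (a * T1 n ω + b)|))
            + min 1 (η⁻¹ * |(A2 n ω * T2 n ω + B2 n ω) - (a * T2 n ω + b)|) := by
        intro ω
        have s1 : stp (t - η) η (A1 n ω * T1 n ω + B1 n ω)
            ≤ (if A1 n ω * T1 n ω + B1 n ω ≤ t then (1:ℝ) else 0) :=
          stp_le_ind hη _ _ (by ring)
        have s2 : stp (t - η) η (A2 n ω * T2 n ω + B2 n ω)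
            ≤ (if A2 n ω * T2 n ω + B2 n ω ≤ t then (1:ℝ) else 0) :=
          stp_le_ind hη _ _ (by ring)
        have q1 : stp (t - η) η (A1 n ω * T1 n ω + B1 n ω) *
            stp (t - η) η (A2 n ω * T2 n ω + B2 n ω)
            ≤ (if A1 n ω * T1 n ω + B1 n ω ≤ t then (1:ℝ) else 0) *
              (if A2 n ω * T2 n ω + B2 n ω ≤ t then (1:ℝ) else 0) :=
          mul_le_mul s1 s2 (stp_nonneg _ _ _) ite_nonneg'
        have q2 := prod_bound (u := stp (t - η) η (a * T1 n ω + b))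
          (v := stp (t - η) η (a * T2 n ω + b))
          (u' := stp (t - η) η (A1 n ω * T1 n ω + B1 n ω))
          (v' := stp (t - η) η (A2 n ω * T2 n ω + B2 n ω))
          (stp_nonneg _ _ _) (stp_le_one _ _ _) (stp_nonneg _ _ _) (stp_le_one _ _ _)
        have d1 : |stp (t - η) η (a * T1 n ω + b) - stp (t - η) η (A1 n ω * T1 n ω + B1 n ω)|
            ≤ min 1 (η⁻¹ * |(A1 n ω * T1 n ω + B1 n ω) - (a * T1 n ω + b)|) := by
          rw [abs_sub_comm]
          exact stp_diff_le_min hη _ _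
        have d2 : |stp (t - η) η (a * T2 n ω + b) - stp (t - η) η (A2 n ω * T2 n ω + B2 n ω)|
            ≤ min 1 (η⁻¹ * |(A2 n ω * T2 n ω + B2 n ω) - (a * T2 n ω + b)|) := by
          rw [abs_sub_comm]
          exact stp_diff_le_min hη _ _
        linarith
      calc (∫ ω, stp (t - η) η (a * T1 n ω + b) * stp (t - η) η (a * T2 n ω + b) ∂P n)
          ≤ ∫ ω, (((if A1 n ω * T1 n ω + B1 n ω ≤ t then (1:ℝ) else 0) *
              (if A2 n ω * T2 n ω + B2 n ω ≤ t then (1:ℝ) else 0)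
            + min 1 (η⁻¹ * |(A1 n ω * T1 n ω + B1 n ω) - (a * T1 n ω + b)|))
            + min 1 (η⁻¹ * |(A2 n ω * T2 n ω + B2 n ω) - (a * T2 n ω + b)|)) ∂P n :=
            integral_mono (istp n (t - η) η) iSM12' hpw
        _ = _ := by
            rw [integral_add iSM1' (imin2 n η hη), integral_add (iY12 n) (imin1 n η hη)]
    -- combine
    rw [Real.dist_eq, abs_lt]
    have hRup : RaTb (t + η) < RaTb t + κ₁ := by
      have := abs_lt.1 hup; linarith [this.2]
    have hRdn : RaTb t - κ₁ < RaTb (t - η) := by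
      have := abs_lt.1 hdn; linarith [this.1]
    have hRp0 : 0 ≤ RaTb (t + η) := (hR01 _).1
    have hRm0 : 0 ≤ RaTb (t - η) := (hR01 _).1
    have hRm1 : RaTb (t - η) ≤ 1 := (hR01 _).2
    constructor
    · -- lower:  R² - q < κ
      have hL'2 : RaTb (t - η) ^ 2 ≤ L' ^ 2 := pow_le_pow_left₀ hRm0 hL'ge 2
      have hq_ge : L' ^ 2 - κ₁ - κ₁ - κ₁ < ∫ ω,
          (if A1 n ω * T1 n ω + B1 n ω ≤ t then (1:ℝ) else 0) *
          (if A2 n ω * T2 n ω + B2 n ω ≤ t then (1:ℝ) else 0) ∂P n := by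
        linarith only [key_dn, h2, h3a, h3b]
      have hx2 : RaTb t ^ 2 - 2 * κ₁ ≤ RaTb (t - η) ^ 2 := by
        rcases le_or_gt (RaTb t) κ₁ with hc | hc
        · nlinarith only [hRm0, hR0, hc, hκ₁1, sq_nonneg (RaTb (t - η))]
        · have h' : (0:ℝ) ≤ RaTb t - κ₁ := by linarith only [hc]
          have h'' : (RaTb t - κ₁) ^ 2 ≤ RaTb (t - η) ^ 2 :=
            pow_le_pow_left₀ h' hRdn.le 2
          nlinarith only [h'', hR1, hκ₁, hκ₁1]
      linarith only [hq_ge, hL'2, hx2, hκ₁le, hκ, hκ₁]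
    · -- upper: q - R² < κ
      have hL2 : L ^ 2 ≤ RaTb (t + η) ^ 2 := pow_le_pow_left₀ hL0 hLle 2
      have hq_le : (∫ ω, (if A1 n ω * T1 n ω + B1 n ω ≤ t then (1:ℝ) else 0) *
          (if A2 n ω * T2 n ω + B2 n ω ≤ t then (1:ℝ) else 0) ∂P n)
          < L ^ 2 + κ₁ + κ₁ + κ₁ := by
        linarith only [key_up, h1, h3a, h3b]
      have hy2 : RaTb (t + η) ^ 2 ≤ (RaTb t + κ₁) ^ 2 :=
        pow_le_pow_left₀ hRp0 hRup.le 2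
      nlinarith only [hq_le, hL2, hy2, hR1, hR0, hκ₁1, hκ₁le, hκ, hκ₁]
  · -- the single limit
    rw [Metric.tendsto_nhds]
    intro κ hκ
    set κ₁ := min (κ / 4) 1 with hκ₁def
    have hκ₁ : 0 < κ₁ := lt_min (by linarith) one_pos
    have hκ₁le : κ₁ ≤ κ / 4 := min_le_left _ _
    obtain ⟨η₀, hη₀, hct'⟩ := Metric.continuousAt_iff.1 hct κ₁ hκ₁
    set η := η₀ / 2 with hηdef
    have hη : 0 < η := by positivity
    have hup : |RaTb (t + η) - RaTb t| < κ₁ := by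
      have h := hct' (x := t + η) (by
        rw [Real.dist_eq, show t + η - t = η by ring, abs_of_pos hη]; linarith)
      rwa [Real.dist_eq] at h
    have hdn : |RaTb (t - η) - RaTb t| < κ₁ := by
      have h := hct' (x := t - η) (by
        rw [Real.dist_eq, show t - η - t = -η by ring, abs_neg, abs_of_pos hη]; linarith)
      rwa [Real.dist_eq] at h
    have hHZu := (hHZ (stp t η) (continuous_stp t η) (fun s => stp_nonneg t η s)
      (fun s => stp_le_one t η s)).2
    have hHZl := (hHZ (stp (t - η) η) (continuous_stp (t - η) η)
      (fun s => stp_nonneg (t - η) η s) (fun s => stp_le_one (t - η) η s)).2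
    set L := ∫ s, stp t η (a * s + b) ∂ν with hLdef
    set L' := ∫ s, stp (t - η) η (a * s + b) ∂ν with hL'def
    have hLle : L ≤ RaTb (t + η) := by
      rw [← hInd (t + η)]
      exact integral_mono (intν t η hη) (intνind _)
        (fun s => stp_le_ind hη _ _ (by ring))
    have hL'ge : RaTb (t - η) ≤ L' := by
      rw [← hInd (t - η)]
      exact integral_mono (intνind _) (intν (t - η) η hη)
        (fun s => ind_le_stp hη _ _ rfl)
    have hev1 := hHZu.eventually_lt_const (show L < L + κ₁ by linarith)
    have hev2 := hHZl.eventually_const_lt (show L' - κ₁ < L' by linarith)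
    have hev3 := herr η hη κ₁ hκ₁
    filter_upwards [hev1, hev2, hev3] with n h1 h2 h3
    obtain ⟨h3a, _⟩ := h3
    have key_up : (∫ ω, (if A1 n ω * T1 n ω + B1 n ω ≤ t then (1:ℝ) else 0) ∂P n)
        ≤ (∫ ω, stp t η (a * T1 n ω + b) ∂P n)
          + (∫ ω, min 1 (η⁻¹ * |(A1 n ω * T1 n ω + B1 n ω) - (a * T1 n ω + b)|) ∂P n) := by
      have hpw : ∀ ω, (if A1 n ω * T1 n ω + B1 n ω ≤ t then (1:ℝ) else 0)
          ≤ stp t η (a * T1 n ω + b)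
            + min 1 (η⁻¹ * |(A1 n ω * T1 n ω + B1 n ω) - (a * T1 n ω + b)|) := by
        intro ω
        have s1 : (if A1 n ω * T1 n ω + B1 n ω ≤ t then (1:ℝ) else 0)
            ≤ stp t η (A1 n ω * T1 n ω + B1 n ω) := ind_le_stp hη _ _ rfl
        have d1 : |stp t η (A1 n ω * T1 n ω + B1 n ω) - stp t η (a * T1 n ω + b)|
            ≤ min 1 (η⁻¹ * |(A1 n ω * T1 n ω + B1 n ω) - (a * T1 n ω + b)|) :=
          stp_diff_le_min hη _ _
        have := le_abs_self (stp t η (A1 n ω * T1 n ω + B1 n ω) - stp t η (a * T1 n ω + b))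
        linarith
      calc (∫ ω, (if A1 n ω * T1 n ω + B1 n ω ≤ t then (1:ℝ) else 0) ∂P n)
          ≤ ∫ ω, (stp t η (a * T1 n ω + b)
            + min 1 (η⁻¹ * |(A1 n ω * T1 n ω + B1 n ω) - (a * T1 n ω + b)|)) ∂P n :=
            integral_mono (iY1 n) ((istp1 n t η).add (imin1 n η hη)) hpw
        _ = _ := integral_add (istp1 n t η) (imin1 n η hη)
    have key_dn : (∫ ω, stp (t - η) η (a * T1 n ω + b) ∂P n)
        ≤ (∫ ω, (if A1 n ω * T1 n ω + B1 n ω ≤ t then (1:ℝ) else 0) ∂P n)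
          + (∫ ω, min 1 (η⁻¹ * |(A1 n ω * T1 n ω + B1 n ω) - (a * T1 n ω + b)|) ∂P n) := by
      have hpw : ∀ ω, stp (t - η) η (a * T1 n ω + b)
          ≤ (if A1 n ω * T1 n ω + B1 n ω ≤ t then (1:ℝ) else 0)
            + min 1 (η⁻¹ * |(A1 n ω * T1 n ω + B1 n ω) - (a * T1 n ω + b)|) := by
        intro ω
        have s1 : stp (t - η) η (A1 n ω * T1 n ω + B1 n ω)
            ≤ (if A1 n ω * T1 n ω + B1 n ω ≤ t then (1:ℝ) else 0) :=
          stp_le_ind hη _ _ (by ring)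
        have d1 : |stp (t - η) η (a * T1 n ω + b) - stp (t - η) η (A1 n ω * T1 n ω + B1 n ω)|
            ≤ min 1 (η⁻¹ * |(A1 n ω * T1 n ω + B1 n ω) - (a * T1 n ω + b)|) := by
          rw [abs_sub_comm]
          exact stp_diff_le_min hη _ _
          -- note: arguments order
        have := le_abs_self (stp (t - η) η (a * T1 n ω + b)
          - stp (t - η) η (A1 n ω * T1 n ω + B1 n ω))
        linarith
      calc (∫ ω, stp (t - η) η (a * T1 n ω + b) ∂P n)
          ≤ ∫ ω, ((if A1 n ω * T1 n ω + B1 n ω ≤ t then (1:ℝ) else 0)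
            + min 1 (η⁻¹ * |(A1 n ω * T1 n ω + B1 n ω) - (a * T1 n ω + b)|)) ∂P n :=
            integral_mono (istp1 n (t - η) η) ((iY1 n).add (imin1 n η hη)) hpw
        _ = _ := integral_add (iY1 n) (imin1 n η hη)
    rw [Real.dist_eq, abs_lt]
    have hRup : RaTb (t + η) < RaTb t + κ₁ := by
      have := abs_lt.1 hup; linarith [this.2]
    have hRdn : RaTb t - κ₁ < RaTb (t - η) := by
      have := abs_lt.1 hdn; linarith [this.1]
    constructor
    · linarith only [key_dn, h2, h3a, hL'ge, hRdn, hκ₁le, hκ]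
    · linarith only [key_up, h1, h3a, hLle, hRup, hκ₁le, hκ]

end SlutskyAux

open SlutskyAux

/-- Slutsky's theorem for randomization distributions.  With the randomization
setup (data with law `μ n` on `𝒳 n`, finite group `G n` acting measurably, independent uniform
group elements independent of the data, modelled via product measures): if
`(Tₙ(g•Xⁿ), Tₙ(g'•Xⁿ))` converges in distribution to `ν ⊗ ν` (independent `(T,T')` with
common c.d.f.), and `Aₙ(g•Xⁿ) → a`, `Bₙ(g•Xⁿ) → b` in probability for constants `a, b`,
then the randomization distribution of `AₙTₙ + Bₙ`,
`R̂ₙ^{AT+B}(t) = |Gₙ|⁻¹ Σ_g 1{Aₙ(g•Xⁿ)Tₙ(g•Xⁿ) + Bₙ(g•Xⁿ) ≤ t}`, converges in probability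
to the c.d.f. `R^{aT+b}` of `aT + b` at each of its continuity points `t`. -/
theorem slutsky_for_randomization_distributions
    {𝒳 : ℕ → Type*} [∀ n, MeasurableSpace (𝒳 n)]
    {G : ℕ → Type*} [∀ n, Group (G n)] [∀ n, Fintype (G n)]
    [∀ n, MeasurableSpace (G n)] [∀ n, MeasurableSingletonClass (G n)]
    [∀ n, MulAction (G n) (𝒳 n)]
    (hact : ∀ n (g : G n), Measurable fun x : 𝒳 n => g • x)
    (μ : ∀ n, Measure (𝒳 n)) (hprob : ∀ n, IsProbabilityMeasure (μ n))
    (T A B : ∀ n, 𝒳 n → ℝ)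
    (hT : ∀ n, Measurable (T n)) (hA : ∀ n, Measurable (A n)) (hB : ∀ n, Measurable (B n))
    (uG : ∀ n, Measure (G n))
    (huG : ∀ n, uG n = ((Fintype.card (G n) : ℝ≥0∞))⁻¹ • Measure.count)
    (ν : Measure ℝ) [IsProbabilityMeasure ν]
    -- Hoeffding's condition for T
    (hconv : ∀ f : (ℝ × ℝ) →ᵇ ℝ,
      Tendsto (fun n => ∫ x, f (T n (x.1 • x.2.2), T n (x.2.1 • x.2.2))
          ∂((uG n).prod ((uG n).prod (μ n))))
        atTop (𝓝 (∫ p, f p ∂(ν.prod ν))))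
    (a b : ℝ)
    -- A_n(G_n X^n) → a in probability
    (hAconv : ∀ ε > 0, Tendsto
      (fun n => ((uG n).prod (μ n)) {x | ε ≤ |A n (x.1 • x.2) - a|}) atTop (𝓝 0))
    -- B_n(G_n X^n) → b in probability
    (hBconv : ∀ ε > 0, Tendsto
      (fun n => ((uG n).prod (μ n)) {x | ε ≤ |B n (x.1 • x.2) - b|}) atTop (𝓝 0))
    -- the c.d.f. of aT + b
    (RaTb : ℝ → ℝ) (hRaTb : ∀ t, RaTb t = ((ν.map fun s => a * s + b) (Set.Iic t)).toReal)
    -- the randomization distribution of A_n T_n + B_n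
    (RhatATB : ∀ n, ℝ → 𝒳 n → ℝ)
    (hRhatATB : ∀ n t x, RhatATB n t x = (Fintype.card (G n) : ℝ)⁻¹ *
      ∑ g : G n, if A n (g • x) * T n (g • x) + B n (g • x) ≤ t then (1 : ℝ) else 0) :
    ∀ t : ℝ, ContinuousAt RaTb t →
      ∀ ε > 0, Tendsto (fun n => μ n {x | ε ≤ |RhatATB n t x - RaTb t|}) atTop (𝓝 0) := by
  intro t hct ε hε
  -- the uniform measures are probability measures
  have huGp : ∀ n, IsProbabilityMeasure (uG n) := by
    intro n
    constructor
    rw [huG n, Measure.smul_apply, Measure.count_univ, ENat.card_eq_coe_fintype_card, ENat.toENNReal_coe, smul_eq_mul,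
      ENNReal.inv_mul_cancel (Nat.cast_ne_zero.2 Fintype.card_ne_zero)
        (ENNReal.natCast_ne_top _)]
  haveI := fun n => huGp n
  haveI := fun n => hprob n
  haveI : ∀ n, IsProbabilityMeasure ((uG n).prod ((uG n).prod (μ n))) := fun n => by
    infer_instance
  -- measurability of the group action on products
  have mact : ∀ n, Measurable (fun p : G n × 𝒳 n => p.1 • p.2) := by
    intro n
    have h : Measurable (fun p : 𝒳 n × G n => p.2 • p.1) :=
      measurable_from_prod_countable_left (fun g => hact n g)
    exact h.comp measurable_swap
  have m1 : ∀ n, Measurable (fun ω : G n × (G n × 𝒳 n) => ω.1 • ω.2.2) :=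
    fun n => (mact n).comp (measurable_fst.prodMk measurable_snd.snd)
  have m2 : ∀ n, Measurable (fun ω : G n × (G n × 𝒳 n) => ω.2.1 • ω.2.2) :=
    fun n => (mact n).comp (measurable_snd.fst.prodMk measurable_snd.snd)
  -- marginal identities
  have hmap1 : ∀ n, ((uG n).prod ((uG n).prod (μ n))).map
      (fun ω : G n × (G n × 𝒳 n) => (ω.1, ω.2.2)) = (uG n).prod (μ n) := by
    intro n
    have h1 : (fun ω : G n × (G n × 𝒳 n) => (ω.1, ω.2.2))
        = Prod.map (id : G n → G n) (Prod.snd : G n × 𝒳 n → 𝒳 n) := rfl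
    rw [h1, ← Measure.map_prod_map (uG n) ((uG n).prod (μ n)) measurable_id measurable_snd,
      Measure.map_id, Measure.map_snd_prod, measure_univ, one_smul]
  have hmap2 : ∀ n, ((uG n).prod ((uG n).prod (μ n))).map
      (Prod.snd : G n × (G n × 𝒳 n) → G n × 𝒳 n) = (uG n).prod (μ n) := by
    intro n
    rw [Measure.map_snd_prod, measure_univ, one_smul]
  -- translating convergence in probability into integral form (copy 1 and copy 2)
  have hconvAB : ∀ (C : ∀ n, 𝒳 n → ℝ), (∀ n, Measurable (C n)) → ∀ (c : ℝ),
      (∀ δ > 0, Tendsto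
        (fun n => ((uG n).prod (μ n)) {x | δ ≤ |C n (x.1 • x.2) - c|}) atTop (𝓝 0)) →
      (∀ δ > (0:ℝ), Tendsto (fun n => ∫ ω : G n × (G n × 𝒳 n),
          (if δ ≤ |C n (ω.1 • ω.2.2) - c| then (1:ℝ) else 0)
          ∂((uG n).prod ((uG n).prod (μ n)))) atTop (𝓝 0)) ∧
      (∀ δ > (0:ℝ), Tendsto (fun n => ∫ ω : G n × (G n × 𝒳 n),
          (if δ ≤ |C n (ω.2.1 • ω.2.2) - c| then (1:ℝ) else 0)
          ∂((uG n).prod ((uG n).prod (μ n)))) atTop (𝓝 0)) := by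
    intro C mC c hC
    have hSm : ∀ n (δ : ℝ), MeasurableSet {x : G n × 𝒳 n | δ ≤ |C n (x.1 • x.2) - c|} :=
      fun n δ => measurableSet_le measurable_const
        (((mC n).comp (mact n)).sub measurable_const).abs
    have htoReal : ∀ δ > (0:ℝ), Tendsto
        (fun n => (((uG n).prod (μ n)) {x | δ ≤ |C n (x.1 • x.2) - c|}).toReal)
        atTop (𝓝 0) := by
      intro δ hδ
      have h := (ENNReal.tendsto_toReal (a := 0) (by simp)).comp (hC δ hδ)
      exact h
    constructor
    · intro δ hδ
      refine (htoReal δ hδ).congr (fun n => ?_)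
      have hind : (fun ω : G n × (G n × 𝒳 n) =>
          (if δ ≤ |C n (ω.1 • ω.2.2) - c| then (1:ℝ) else 0))
          = fun ω => Set.indicator ((fun ω : G n × (G n × 𝒳 n) => (ω.1, ω.2.2)) ⁻¹'
            {x : G n × 𝒳 n | δ ≤ |C n (x.1 • x.2) - c|}) 1 ω := by
        ext ω; simp [Set.indicator_apply]
      rw [hind, integral_indicator_one
        ((hSm n δ).preimage (measurable_fst.prodMk measurable_snd.snd)), Measure.real,
        ← Measure.map_apply (measurable_fst.prodMk measurable_snd.snd) (hSm n δ), hmap1 n]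
    · intro δ hδ
      refine (htoReal δ hδ).congr (fun n => ?_)
      have hind : (fun ω : G n × (G n × 𝒳 n) =>
          (if δ ≤ |C n (ω.2.1 • ω.2.2) - c| then (1:ℝ) else 0))
          = fun ω => Set.indicator ((Prod.snd : G n × (G n × 𝒳 n) → G n × 𝒳 n) ⁻¹'
            {x : G n × 𝒳 n | δ ≤ |C n (x.1 • x.2) - c|}) 1 ω := by
        ext ω; simp [Set.indicator_apply]
      rw [hind, integral_indicator_one ((hSm n δ).preimage measurable_snd), Measure.real,
        ← Measure.map_apply measurable_snd (hSm n δ), hmap2 n]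
  obtain ⟨hA1i, hA2i⟩ := hconvAB A hA a hAconv
  obtain ⟨hB1i, hB2i⟩ := hconvAB B hB b hBconv
  -- apply the core lemma
  obtain ⟨hq, hp⟩ := core (fun n => (uG n).prod ((uG n).prod (μ n)))
    (fun n ω => T n (ω.1 • ω.2.2)) (fun n ω => T n (ω.2.1 • ω.2.2))
    (fun n ω => A n (ω.1 • ω.2.2)) (fun n ω => A n (ω.2.1 • ω.2.2))
    (fun n ω => B n (ω.1 • ω.2.2)) (fun n ω => B n (ω.2.1 • ω.2.2))
    (fun n => (hT n).comp (m1 n)) (fun n => (hT n).comp (m2 n))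
    (fun n => (hA n).comp (m1 n)) (fun n => (hA n).comp (m2 n))
    (fun n => (hB n).comp (m1 n)) (fun n => (hB n).comp (m2 n))
    ν a b t hconv hA1i hA2i hB1i hB2i RaTb hRaTb hct
  -- basic facts about R-hat
  have hc0 : ∀ n, (0:ℝ) < (Fintype.card (G n) : ℝ) := fun n => by
    exact_mod_cast Fintype.card_pos
  have me : ∀ n (g : G n), Measurable (fun x : 𝒳 n =>
      (if A n (g • x) * T n (g • x) + B n (g • x) ≤ t then (1:ℝ) else 0)) :=
    fun n g => measurable_ite_le
      ((((hA n).comp (hact n g)).mul ((hT n).comp (hact n g))).add ((hB n).comp (hact n g)))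
      measurable_const
  have mRhat : ∀ n, Measurable (RhatATB n t) := by
    intro n
    have h1 : RhatATB n t = fun x => (Fintype.card (G n) : ℝ)⁻¹ *
        ∑ g : G n, if A n (g • x) * T n (g • x) + B n (g • x) ≤ t then (1:ℝ) else 0 :=
      funext (hRhatATB n t)
    rw [h1]
    exact measurable_const.mul (Finset.measurable_sum Finset.univ (fun g _ => me n g))
  have hRb : ∀ n x, |RhatATB n t x| ≤ 1 := by
    intro n x
    rw [hRhatATB n t x, abs_mul, abs_inv, abs_of_nonneg (Nat.cast_nonneg _)]
    calc (Fintype.card (G n) : ℝ)⁻¹ *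
        |∑ g : G n, if A n (g • x) * T n (g • x) + B n (g • x) ≤ t then (1:ℝ) else 0|
        ≤ (Fintype.card (G n) : ℝ)⁻¹ * (Fintype.card (G n) : ℝ) := by
          refine mul_le_mul_of_nonneg_left ?_ (inv_nonneg.2 (Nat.cast_nonneg _))
          refine (Finset.abs_sum_le_sum_abs _ _).trans ?_
          calc ∑ g : G n, |if A n (g • x) * T n (g • x) + B n (g • x) ≤ t then (1:ℝ) else 0|
              ≤ ∑ _g : G n, (1:ℝ) := Finset.sum_le_sum (fun g _ => abs_ite_le)
            _ = (Fintype.card (G n) : ℝ) := by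
                rw [Finset.sum_const, Finset.card_univ, nsmul_eq_mul, mul_one]
      _ = 1 := inv_mul_cancel₀ (hc0 n).ne'
  -- the second-moment expansion
  have hexp : ∀ n, ∫ x, (RhatATB n t x - RaTb t) ^ 2 ∂μ n
      = (∫ ω : G n × (G n × 𝒳 n),
          (if A n (ω.1 • ω.2.2) * T n (ω.1 • ω.2.2) + B n (ω.1 • ω.2.2) ≤ t then (1:ℝ) else 0) *
          (if A n (ω.2.1 • ω.2.2) * T n (ω.2.1 • ω.2.2) + B n (ω.2.1 • ω.2.2) ≤ t then (1:ℝ)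
            else 0) ∂((uG n).prod ((uG n).prod (μ n))))
        - 2 * RaTb t * (∫ ω : G n × (G n × 𝒳 n),
          (if A n (ω.1 • ω.2.2) * T n (ω.1 • ω.2.2) + B n (ω.1 • ω.2.2) ≤ t then (1:ℝ) else 0)
            ∂((uG n).prod ((uG n).prod (μ n))))
        + RaTb t ^ 2 := by
    intro n
    set c : ℝ := (Fintype.card (G n) : ℝ) with hcdef
    let e : G n → 𝒳 n → ℝ :=
      fun g x => if A n (g • x) * T n (g • x) + B n (g • x) ≤ t then (1:ℝ) else 0
    have huGsingle : ∀ g : G n, ((uG n) {g}).toReal = c⁻¹ := by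
      intro g
      rw [huG n, Measure.smul_apply, Measure.count_singleton, smul_eq_mul, mul_one,
        ENNReal.toReal_inv]
      simp [hcdef]
    have hintuG : ∀ f : G n → ℝ, ∫ g, f g ∂uG n = c⁻¹ * ∑ g, f g := by
      intro f
      rw [integral_fintype (Integrable.of_finite)]
      simp only [Measure.real, huGsingle, smul_eq_mul]
      rw [Finset.mul_sum]
    have ie : ∀ g : G n, Integrable (e g) (μ n) :=
      fun g => integrable_of_bound (μ n) (me n g) 1 (fun x => abs_ite_le)
    have iee : ∀ g g' : G n, Integrable (fun x => e g x * e g' x) (μ n) :=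
      fun g g' => integrable_of_bound (μ n) ((me n g).mul (me n g')) 1
        (fun x => by rw [abs_mul]
                     exact mul_le_one₀ abs_ite_le (abs_nonneg _) abs_ite_le)
    -- measurable/integrable on the big product space
    have mE1 : Measurable (fun ω : G n × (G n × 𝒳 n) =>
        (if A n (ω.1 • ω.2.2) * T n (ω.1 • ω.2.2) + B n (ω.1 • ω.2.2) ≤ t
          then (1:ℝ) else 0)) :=
      measurable_ite_le
        ((((hA n).comp (m1 n)).mul ((hT n).comp (m1 n))).add ((hB n).comp (m1 n)))
        measurable_const
    have mE2 : Measurable (fun ω : G n × (G n × 𝒳 n) =>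
        (if A n (ω.2.1 • ω.2.2) * T n (ω.2.1 • ω.2.2) + B n (ω.2.1 • ω.2.2) ≤ t
          then (1:ℝ) else 0)) :=
      measurable_ite_le
        ((((hA n).comp (m2 n)).mul ((hT n).comp (m2 n))).add ((hB n).comp (m2 n)))
        measurable_const
    have iE12 : Integrable (fun ω : G n × (G n × 𝒳 n) =>
        (if A n (ω.1 • ω.2.2) * T n (ω.1 • ω.2.2) + B n (ω.1 • ω.2.2) ≤ t then (1:ℝ) else 0) *
        (if A n (ω.2.1 • ω.2.2) * T n (ω.2.1 • ω.2.2) + B n (ω.2.1 • ω.2.2) ≤ t then (1:ℝ)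
          else 0)) ((uG n).prod ((uG n).prod (μ n))) :=
      integrable_of_bound _ (mE1.mul mE2) 1
        (fun ω => by rw [abs_mul]
                     exact mul_le_one₀ abs_ite_le (abs_nonneg _) abs_ite_le)
    have iE1 : Integrable (fun ω : G n × (G n × 𝒳 n) =>
        (if A n (ω.1 • ω.2.2) * T n (ω.1 • ω.2.2) + B n (ω.1 • ω.2.2) ≤ t then (1:ℝ) else 0))
        ((uG n).prod ((uG n).prod (μ n))) :=
      integrable_of_bound _ mE1 1 (fun ω => abs_ite_le)
    -- Fubini for the pair integral
    have step1 : (∫ ω : G n × (G n × 𝒳 n),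
        (if A n (ω.1 • ω.2.2) * T n (ω.1 • ω.2.2) + B n (ω.1 • ω.2.2) ≤ t then (1:ℝ) else 0) *
        (if A n (ω.2.1 • ω.2.2) * T n (ω.2.1 • ω.2.2) + B n (ω.2.1 • ω.2.2) ≤ t then (1:ℝ)
          else 0) ∂((uG n).prod ((uG n).prod (μ n))))
        = ∫ g, ∫ w : G n × 𝒳 n, e g w.2 * e w.1 w.2 ∂((uG n).prod (μ n)) ∂uG n :=
      integral_prod _ iE12
    have step2 : ∀ g : G n, (∫ w : G n × 𝒳 n, e g w.2 * e w.1 w.2 ∂((uG n).prod (μ n)))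
        = c⁻¹ * ∑ g', ∫ x, e g x * e g' x ∂μ n := by
      intro g
      have i1 : Integrable (fun w : G n × 𝒳 n => e g w.2 * e w.1 w.2)
          ((uG n).prod (μ n)) := by
        refine integrable_of_bound _ (((me n g).comp measurable_snd).mul ?_) 1
          (fun w => by rw [abs_mul]
                       exact mul_le_one₀ abs_ite_le (abs_nonneg _) abs_ite_le)
        exact measurable_ite_le
          ((((hA n).comp (mact n)).mul ((hT n).comp (mact n))).add ((hB n).comp (mact n)))
          measurable_const
      have h1 : (∫ w : G n × 𝒳 n, e g w.2 * e w.1 w.2 ∂((uG n).prod (μ n)))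
          = ∫ g', ∫ x, e g x * e g' x ∂μ n ∂uG n := integral_prod _ i1
      rw [h1, hintuG]
    have step3 : (∫ ω : G n × (G n × 𝒳 n),
        (if A n (ω.1 • ω.2.2) * T n (ω.1 • ω.2.2) + B n (ω.1 • ω.2.2) ≤ t then (1:ℝ) else 0) *
        (if A n (ω.2.1 • ω.2.2) * T n (ω.2.1 • ω.2.2) + B n (ω.2.1 • ω.2.2) ≤ t then (1:ℝ)
          else 0) ∂((uG n).prod ((uG n).prod (μ n))))
        = c⁻¹ * ∑ g, (c⁻¹ * ∑ g', ∫ x, e g x * e g' x ∂μ n) := by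
      rw [step1,
        show (fun g => ∫ w : G n × 𝒳 n, e g w.2 * e w.1 w.2 ∂((uG n).prod (μ n)))
          = fun g => c⁻¹ * ∑ g', ∫ x, e g x * e g' x ∂μ n from funext step2, hintuG]
    -- Fubini for the single integral
    have sp1 : (∫ ω : G n × (G n × 𝒳 n),
        (if A n (ω.1 • ω.2.2) * T n (ω.1 • ω.2.2) + B n (ω.1 • ω.2.2) ≤ t then (1:ℝ) else 0)
          ∂((uG n).prod ((uG n).prod (μ n))))
        = ∫ g, ∫ w : G n × 𝒳 n, e g w.2 ∂((uG n).prod (μ n)) ∂uG n :=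
      integral_prod _ iE1
    have sp2 : ∀ g : G n, (∫ w : G n × 𝒳 n, e g w.2 ∂((uG n).prod (μ n)))
        = ∫ x, e g x ∂μ n := by
      intro g
      have i1 : Integrable (fun w : G n × 𝒳 n => e g w.2) ((uG n).prod (μ n)) :=
        integrable_of_bound _ ((me n g).comp measurable_snd) 1 (fun w => abs_ite_le)
      have h1 : (∫ w : G n × 𝒳 n, e g w.2 ∂((uG n).prod (μ n)))
          = ∫ _g', ∫ x, e g x ∂μ n ∂uG n := integral_prod _ i1
      rw [h1, integral_const, Measure.real, measure_univ]
      simp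
    have sp3 : (∫ ω : G n × (G n × 𝒳 n),
        (if A n (ω.1 • ω.2.2) * T n (ω.1 • ω.2.2) + B n (ω.1 • ω.2.2) ≤ t then (1:ℝ) else 0)
          ∂((uG n).prod ((uG n).prod (μ n))))
        = c⁻¹ * ∑ g, ∫ x, e g x ∂μ n := by
      rw [sp1,
        show (fun g => ∫ w : G n × 𝒳 n, e g w.2 ∂((uG n).prod (μ n)))
          = fun g => ∫ x, e g x ∂μ n from funext sp2, hintuG]
    -- the R-hat side
    have hRhat : ∀ x, RhatATB n t x = c⁻¹ * ∑ g, e g x := hRhatATB n t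
    have hsum_int : ∫ x, RhatATB n t x ∂μ n = c⁻¹ * ∑ g, ∫ x, e g x ∂μ n := by
      rw [show (fun x => RhatATB n t x) = fun x => c⁻¹ * ∑ g, e g x from funext hRhat,
        integral_const_mul, integral_finset_sum _ (fun g _ => ie g)]
    have hsq : ∀ x, (RhatATB n t x) ^ 2 = c⁻¹ * ∑ g, (c⁻¹ * ∑ g', e g x * e g' x) := by
      intro x
      rw [hRhat x]
      have hs : (∑ g, e g x) * (∑ g', e g' x) = ∑ g, ∑ g', e g x * e g' x :=
        Finset.sum_mul_sum _ _ _ _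
      calc (c⁻¹ * ∑ g, e g x) ^ 2
          = c⁻¹ * c⁻¹ * ((∑ g, e g x) * (∑ g', e g' x)) := by ring
        _ = c⁻¹ * c⁻¹ * ∑ g, ∑ g', e g x * e g' x := by rw [hs]
        _ = c⁻¹ * ∑ g, (c⁻¹ * ∑ g', e g x * e g' x) := by
            conv_rhs => rw [← Finset.mul_sum]
            ring
    have hsq_int : ∫ x, (RhatATB n t x) ^ 2 ∂μ n
        = c⁻¹ * ∑ g, (c⁻¹ * ∑ g', ∫ x, e g x * e g' x ∂μ n) := by
      rw [show (fun x => (RhatATB n t x) ^ 2)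
          = fun x => c⁻¹ * ∑ g, (c⁻¹ * ∑ g', e g x * e g' x) from funext hsq,
        integral_const_mul,
        integral_finset_sum _ (fun g _ => ((integrable_finset_sum _
          (fun g' _ => iee g g')).const_mul c⁻¹))]
      congr 1
      refine Finset.sum_congr rfl (fun g _ => ?_)
      rw [integral_const_mul, integral_finset_sum _ (fun g' _ => iee g g')]
    -- expansion of the square
    have hiR : Integrable (fun x => RhatATB n t x) (μ n) :=
      integrable_of_bound (μ n) (mRhat n) 1 (hRb n)
    have hiR2 : Integrable (fun x => (RhatATB n t x) ^ 2) (μ n) := by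
      refine integrable_of_bound (μ n) ((mRhat n).pow_const 2) 1 (fun x => ?_)
      rw [abs_pow]
      exact pow_le_one₀ (abs_nonneg _) (hRb n x)
    have hfinal : ∫ x, (RhatATB n t x - RaTb t) ^ 2 ∂μ n
        = (∫ x, (RhatATB n t x) ^ 2 ∂μ n) - 2 * RaTb t * (∫ x, RhatATB n t x ∂μ n)
          + RaTb t ^ 2 := by
      have h1 : (fun x => (RhatATB n t x - RaTb t) ^ 2)
          = fun x => ((RhatATB n t x) ^ 2 - 2 * RaTb t * RhatATB n t x) + RaTb t ^ 2 := by
        funext x; ring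
      have hiRS : Integrable
          (fun x => (RhatATB n t x) ^ 2 - 2 * RaTb t * RhatATB n t x) (μ n) :=
        hiR2.sub (hiR.const_mul (2 * RaTb t))
      rw [h1, integral_add hiRS (integrable_const _),
        integral_sub hiR2 (hiR.const_mul (2 * RaTb t)), integral_const_mul, integral_const,
        Measure.real, measure_univ]
      simp
    rw [hfinal, hsq_int, hsum_int, ← step3, ← sp3]
  -- convergence of the second moment to zero
  have hvar : Tendsto (fun n => ∫ x, (RhatATB n t x - RaTb t) ^ 2 ∂μ n) atTop (𝓝 0) := by
    have h := (hq.sub (hp.const_mul (2 * RaTb t))).add_const (RaTb t ^ 2)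
    rw [show RaTb t ^ 2 - 2 * RaTb t * RaTb t + RaTb t ^ 2 = 0 by ring] at h
    exact h.congr (fun n => (hexp n).symm)
  -- Chebyshev
  have hcheb : ∀ n, μ n {x | ε ≤ |RhatATB n t x - RaTb t|}
      ≤ ENNReal.ofReal ((ε ^ 2)⁻¹ * ∫ x, (RhatATB n t x - RaTb t) ^ 2 ∂μ n) := by
    intro n
    have hSm : MeasurableSet {x : 𝒳 n | ε ≤ |RhatATB n t x - RaTb t|} :=
      measurableSet_le measurable_const ((mRhat n).sub measurable_const).abs
    have hintsq : Integrable (fun x => (RhatATB n t x - RaTb t) ^ 2) (μ n) := by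
      refine integrable_of_bound (μ n) (((mRhat n).sub measurable_const).pow_const 2)
        ((1 + |RaTb t|) ^ 2) (fun x => ?_)
      rw [abs_pow]
      refine pow_le_pow_left₀ (abs_nonneg _) ?_ 2
      calc |RhatATB n t x - RaTb t| ≤ |RhatATB n t x| + |RaTb t| := abs_sub _ _
        _ ≤ 1 + |RaTb t| := by linarith [hRb n x]
    calc μ n {x | ε ≤ |RhatATB n t x - RaTb t|}
        = ∫⁻ x in {x | ε ≤ |RhatATB n t x - RaTb t|}, 1 ∂μ n := (setLIntegral_one _).symm
      _ ≤ ∫⁻ x in {x | ε ≤ |RhatATB n t x - RaTb t|},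
            ENNReal.ofReal ((ε ^ 2)⁻¹ * (RhatATB n t x - RaTb t) ^ 2) ∂μ n := by
          refine setLIntegral_mono
            (ENNReal.measurable_ofReal.comp
              ((((mRhat n).sub measurable_const).pow_const 2).const_mul _)) ?_
          intro x hx
          simp only [Set.mem_setOf_eq] at hx
          rw [show (1:ℝ≥0∞) = ENNReal.ofReal 1 by simp]
          refine ENNReal.ofReal_le_ofReal ?_
          have h1 : ε ^ 2 ≤ (RhatATB n t x - RaTb t) ^ 2 := by
            have := pow_le_pow_left₀ hε.le hx 2
            rwa [← sq_abs (RhatATB n t x - RaTb t)]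
          rw [inv_mul_eq_div, le_div_iff₀ (by positivity), one_mul]
          exact h1
      _ ≤ ∫⁻ x, ENNReal.ofReal ((ε ^ 2)⁻¹ * (RhatATB n t x - RaTb t) ^ 2) ∂μ n :=
          setLIntegral_le_lintegral _ _
      _ = ENNReal.ofReal (∫ x, (ε ^ 2)⁻¹ * (RhatATB n t x - RaTb t) ^ 2 ∂μ n) :=
          (ofReal_integral_eq_lintegral_ofReal (hintsq.const_mul _)
            (ae_of_all _ (fun x => by positivity))).symm
      _ = ENNReal.ofReal ((ε ^ 2)⁻¹ * ∫ x, (RhatATB n t x - RaTb t) ^ 2 ∂μ n) := by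
          rw [integral_const_mul]
  -- squeeze
  have hupper : Tendsto (fun n => ENNReal.ofReal
      ((ε ^ 2)⁻¹ * ∫ x, (RhatATB n t x - RaTb t) ^ 2 ∂μ n)) atTop (𝓝 0) := by
    have h2 : Tendsto (fun n => (ε ^ 2)⁻¹ * ∫ x, (RhatATB n t x - RaTb t) ^ 2 ∂μ n)
        atTop (𝓝 0) := by
      have := hvar.const_mul ((ε ^ 2)⁻¹)
      simpa using this
    have h3 := ENNReal.tendsto_ofReal h2
    simpa using h3
  exact tendsto_of_tendsto_of_tendsto_of_le_of_le tendsto_const_nhds hupper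
    (fun n => zero_le) (fun n => hcheb n)
end

section
/- For the two-sample mean comparison, the permutation-distribution asymptotic variance τ²(P̄) = σ²(P̄)/(p(1-p)) equals the true unconditional asymptotic variance σ²(P)/p + σ²(Q)/(1-p) of N^{1/2}(X̄ₘ - Ȳₙ) under equal means μ(P) = μ(Q) if and only if p = 1/2 or σ²(P) = σ²(Q). -/
open MeasureTheory ProbabilityTheory

/-- For the two-sample mean comparison, the permutation-distribution asymptotic
variance `τ²(P̄) = σ²(P̄)/(p(1-p))` equals the true unconditional asymptotic variance
`σ²(P)/p + σ²(Q)/(1-p)` of `√N (X̄ₘ - Ȳₙ)` under equal means if and only if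
`p = 1/2` or `σ²(P) = σ²(Q)`. -/
theorem permutation_variance_eq_true_variance_iff
    (P Q : Measure ℝ) [IsProbabilityMeasure P] [IsProbabilityMeasure Q]
    (hP2 : MemLp id 2 P) (hQ2 : MemLp id 2 Q)
    (hmeans : ∫ x, x ∂P = ∫ x, x ∂Q)
    (p : ℝ) (hp : 0 < p) (hp1 : p < 1)
    (σP2 σQ2 σbar2 : ℝ)
    (hσP : σP2 = variance id P) (hσQ : σQ2 = variance id Q)
    (hσPpos : 0 < σP2) (hσQpos : 0 < σQ2)
    (hσbar : σbar2 = variance id ((ENNReal.ofReal p) • P + (ENNReal.ofReal (1 - p)) • Q)) :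
    σbar2 / (p * (1 - p)) = σP2 / p + σQ2 / (1 - p) ↔ (p = 1 / 2 ∨ σP2 = σQ2) := by
  have hp' : (0:ℝ) ≤ p := hp.le
  have hq' : (0:ℝ) ≤ 1 - p := by linarith
  set Pb : Measure ℝ := (ENNReal.ofReal p) • P + (ENNReal.ofReal (1 - p)) • Q with hPb
  have hprob : IsProbabilityMeasure Pb := by
    constructor
    simp only [hPb, Measure.add_apply, Measure.smul_apply, smul_eq_mul,
      measure_univ, mul_one]
    rw [← ENNReal.ofReal_add hp' hq']
    norm_num
  -- Memℒp of id over Pb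
  have hidm : AEStronglyMeasurable (id : ℝ → ℝ) Pb := aestronglyMeasurable_id
  have hsqP : Integrable (fun x : ℝ => x ^ 2) P := by simpa using hP2.integrable_sq
  have hsqQ : Integrable (fun x : ℝ => x ^ 2) Q := by simpa using hQ2.integrable_sq
  have hsqPb : Integrable (fun x : ℝ => x ^ 2) Pb := by
    exact Integrable.add_measure (hsqP.smul_measure ENNReal.ofReal_ne_top)
      (hsqQ.smul_measure ENNReal.ofReal_ne_top)
  have hPb2 : MemLp (id : ℝ → ℝ) 2 Pb := by
    rw [memLp_two_iff_integrable_sq hidm]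
    simpa using hsqPb
  have hintP : Integrable (fun x : ℝ => x) P := by exact hP2.integrable one_le_two
  have hintQ : Integrable (fun x : ℝ => x) Q := by exact hQ2.integrable one_le_two
  -- integrals over Pb
  have hintPb : ∫ x, x ∂Pb = p * (∫ x, x ∂P) + (1 - p) * (∫ x, x ∂Q) := by
    rw [hPb, integral_add_measure (hintP.smul_measure ENNReal.ofReal_ne_top)
      (hintQ.smul_measure ENNReal.ofReal_ne_top), integral_smul_measure,
      integral_smul_measure, ENNReal.toReal_ofReal hp', ENNReal.toReal_ofReal hq']
    simp [smul_eq_mul]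
  have hsqintPb : ∫ x, x ^ 2 ∂Pb = p * (∫ x, x ^ 2 ∂P) + (1 - p) * (∫ x, x ^ 2 ∂Q) := by
    rw [hPb, integral_add_measure (hsqP.smul_measure ENNReal.ofReal_ne_top)
      (hsqQ.smul_measure ENNReal.ofReal_ne_top), integral_smul_measure,
      integral_smul_measure, ENNReal.toReal_ofReal hp', ENNReal.toReal_ofReal hq']
    simp [smul_eq_mul]
  -- variance formulas
  have hvP : σP2 = (∫ x, x ^ 2 ∂P) - (∫ x, x ∂P) ^ 2 := by
    rw [hσP, variance_eq_sub hP2]; simp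
  have hvQ : σQ2 = (∫ x, x ^ 2 ∂Q) - (∫ x, x ∂Q) ^ 2 := by
    rw [hσQ, variance_eq_sub hQ2]; simp
  have hvbar : σbar2 = p * σP2 + (1 - p) * σQ2 := by
    rw [hσbar]
    have : variance id Pb = (∫ x, x ^ 2 ∂Pb) - (∫ x, x ∂Pb) ^ 2 := by
      rw [variance_eq_sub hPb2]; simp
    rw [this, hintPb, hsqintPb, hvP, hvQ, hmeans]
    ring
  have hpne : p ≠ 0 := ne_of_gt hp
  have hqne : (1 - p) ≠ 0 := by linarith
  rw [hvbar]
  constructor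
  · intro h
    by_cases h2 : p = 1 / 2
    · exact Or.inl h2
    · right
      field_simp at h
      have key : (2 * p - 1) * (σP2 - σQ2) = 0 := by linear_combination h
      rcases mul_eq_zero.mp key with h3 | h3
      · exact absurd (by linarith) h2
      · linarith
  · rintro (h | h)
    · subst h; field_simp; ring
    · subst h; field_simp; ring
end

section
/- If F is continuously differentiable at its median θ(P) with positive derivative F'(θ(P)), then the sample median satisfies the asymptotic linear expansion m^{1/2}[θ(P̂ₘ) - θ(P)] = m^{-1/2} Σᵢ (1/2 - I{Xᵢ ≤ θ(P)})/F'(θ(P)) + o_P(1), where P̂ₘ is the empirical distribution of X₁,...,Xₘ i.i.d. P. -/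
open MeasureTheory Filter
open scoped ENNReal Topology

/-- The median functional `θ(F) = inf{x : F(x) ≥ 1/2}` of a c.d.f. `F`. -/
noncomputable def medianOfCDF (F : ℝ → ℝ) : ℝ := sInf {x : ℝ | 1 / 2 ≤ F x}

/-- The empirical c.d.f. of the sample `x₁,...,xₘ`. -/
noncomputable def empiricalCDF (m : ℕ) (x : Fin m → ℝ) (t : ℝ) : ℝ :=
  (m : ℝ)⁻¹ * ∑ i, if x i ≤ t then (1 : ℝ) else 0

noncomputable def cnt (m : ℕ) (x : Fin m → ℝ) (s : ℝ) : ℝ :=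
  ∑ i, if x i ≤ s then (1 : ℝ) else 0

lemma count_mono {m : ℕ} (x : Fin m → ℝ) {s t : ℝ} (hst : s ≤ t) :
    (∑ i, if x i ≤ s then (1 : ℝ) else 0) ≤ ∑ i, if x i ≤ t then (1 : ℝ) else 0 := by
  apply Finset.sum_le_sum
  intro i _
  by_cases h : x i ≤ s
  · simp [h, h.trans hst]
  · simp only [if_neg h]
    positivity

lemma empirical_median_le_iff {m : ℕ} (hm : 0 < m) (x : Fin m → ℝ) (s : ℝ) :
    medianOfCDF (empiricalCDF m x) ≤ s ↔
      (m : ℝ) / 2 ≤ ∑ i, if x i ≤ s then (1 : ℝ) else 0 := by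
  have hmR : (0 : ℝ) < m := Nat.cast_pos.mpr hm
  have hiff : ∀ t : ℝ, 1 / 2 ≤ empiricalCDF m x t ↔
      (m : ℝ) / 2 ≤ ∑ i, if x i ≤ t then (1 : ℝ) else 0 := by
    intro t
    rw [empiricalCDF, le_inv_mul_iff₀ hmR]
    constructor <;> intro h <;> nlinarith
  have hne : Finset.Nonempty (Finset.univ : Finset (Fin m)) := by
    simpa [Finset.univ_nonempty_iff] using Fin.pos_iff_nonempty.mp hm
  unfold medianOfCDF
  set E : Set ℝ := {t : ℝ | 1 / 2 ≤ empiricalCDF m x t} with hE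
  have hmax : ((Finset.univ.image x).max' (hne.image x)) ∈ E := by
    rw [hE, Set.mem_setOf_eq, hiff]
    have hle : ∀ i : Fin m, x i ≤ (Finset.univ.image x).max' (hne.image x) := fun i =>
      Finset.le_max' _ _ (Finset.mem_image_of_mem x (Finset.mem_univ i))
    have hsum : (∑ i, if x i ≤ (Finset.univ.image x).max' (hne.image x) then (1:ℝ) else 0)
        = (m : ℝ) := by
      rw [Finset.sum_congr rfl (fun i _ => if_pos (hle i)), Finset.sum_const, Finset.card_univ,
        Fintype.card_fin]
      simp
    rw [hsum]; nlinarith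
  have hEne : E.Nonempty := ⟨_, hmax⟩
  have hbdd : BddBelow E := by
    refine ⟨(Finset.univ.image x).min' (hne.image x), fun y hy => ?_⟩
    rw [hE, Set.mem_setOf_eq, hiff] at hy
    by_contra hlt
    push_neg at hlt
    have hzero : (∑ i, if x i ≤ y then (1:ℝ) else 0) = 0 := by
      apply Finset.sum_eq_zero
      intro i _
      have : ¬ x i ≤ y := fun hxy =>
        absurd (le_trans (Finset.min'_le _ _ (Finset.mem_image_of_mem x
          (Finset.mem_univ i))) hxy) (not_le.mpr hlt)
      simp [this]
    rw [hzero] at hy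
    nlinarith
  constructor
  · intro h
    by_cases hall : ∀ i, x i ≤ s
    · have hsum : (∑ i, if x i ≤ s then (1:ℝ) else 0) = (m : ℝ) := by
        rw [Finset.sum_congr rfl (fun i _ => if_pos (hall i)), Finset.sum_const,
          Finset.card_univ, Fintype.card_fin]
        simp
      rw [hsum]; nlinarith
    · push_neg at hall
      have hne2 : ((Finset.univ.filter fun i => s < x i).image x).Nonempty := by
        obtain ⟨i, hi⟩ := hall
        exact ⟨x i, Finset.mem_image_of_mem x (Finset.mem_filter.mpr ⟨Finset.mem_univ i, hi⟩)⟩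
      set s' := ((Finset.univ.filter fun i => s < x i).image x).min' hne2 with hs'
      have hss' : s < s' := by
        obtain ⟨v, hv, hveq⟩ := Finset.mem_image.mp (Finset.min'_mem _ hne2)
        rw [hs', ← hveq]
        exact (Finset.mem_filter.mp hv).2
      obtain ⟨y, hyE, hys'⟩ := exists_lt_of_csInf_lt hEne (lt_of_le_of_lt h hss')
      rw [hE, Set.mem_setOf_eq, hiff] at hyE
      refine le_trans hyE (Finset.sum_le_sum fun i _ => ?_)
      by_cases hxi : x i ≤ y
      · have hxs : x i ≤ s := by
          by_contra hxs
          push_neg at hxs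
          have : s' ≤ x i := Finset.min'_le _ _ (Finset.mem_image_of_mem x
            (Finset.mem_filter.mpr ⟨Finset.mem_univ i, hxs⟩))
          linarith
        simp [hxi, hxs]
      · simp only [if_neg hxi]
        positivity
  · intro h
    exact csInf_le hbdd (by rw [hE, Set.mem_setOf_eq, hiff]; exact h)

lemma prod_ite_one_eq {m : ℕ} (i : Fin m) (b : ℝ≥0∞) :
    (∏ k : Fin m, if k = i then b else 1) = b := by
  simp [Finset.prod_ite_eq']

lemma prod_ite_two_eq {m : ℕ} {i j : Fin m} (hij : i ≠ j) (b : ℝ≥0∞) :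
    (∏ k : Fin m, if k = i then b else if k = j then b else 1) = b * b := by
  rw [← Finset.mul_prod_erase Finset.univ _ (Finset.mem_univ i)]
  rw [if_pos rfl]
  congr 1
  rw [Finset.prod_congr rfl (g := fun k => if k = j then b else 1) (fun k hk => by
    rw [if_neg (Finset.ne_of_mem_erase hk)])]
  rw [← Finset.mul_prod_erase _ _ (Finset.mem_erase.mpr ⟨hij.symm, Finset.mem_univ j⟩), if_pos rfl]
  rw [Finset.prod_congr rfl (g := fun _ => 1) (fun k hk => by
    rw [if_neg (Finset.ne_of_mem_erase hk)])]
  simp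

lemma pi_cheb (P : Measure ℝ) [IsProbabilityMeasure P] {A : Set ℝ} (hA : MeasurableSet A)
    (m : ℕ) {c : ℝ} (hc : 0 < c) :
    (Measure.pi fun _ : Fin m => P)
      {x | c ≤ |(∑ i, Set.indicator A (fun _ => (1:ℝ)) (x i)) - m * (P A).toReal|} ≤
    ENNReal.ofReal ((m : ℝ) * (P A).toReal / c ^ 2) := by
  classical
  set μ : Measure (Fin m → ℝ) := Measure.pi fun _ : Fin m => P with hμ
  haveI : IsProbabilityMeasure μ := by rw [hμ]; infer_instance
  set p : ℝ := (P A).toReal with hp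
  have hp0 : 0 ≤ p := ENNReal.toReal_nonneg
  set f : Fin m → (Fin m → ℝ) → ℝ := fun i x => Set.indicator A (fun _ => (1:ℝ)) (x i) with hf
  have hSmeas : ∀ i, MeasurableSet {x : Fin m → ℝ | x i ∈ A} :=
    fun i => hA.preimage (measurable_pi_apply i)
  have hfind : ∀ i, f i = Set.indicator {x : Fin m → ℝ | x i ∈ A} (fun _ => (1:ℝ)) := by
    intro i; ext x
    simp only [hf, Set.indicator_apply, Set.mem_setOf_eq]
  have hSi : ∀ i, μ {x : Fin m → ℝ | x i ∈ A} = P A := by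
    intro i
    have hset : {x : Fin m → ℝ | x i ∈ A} =
        Set.pi Set.univ (fun j => if j = i then A else Set.univ) := by
      ext x
      simp only [Set.mem_setOf_eq, Set.mem_pi, Set.mem_univ, forall_true_left]
      constructor
      · intro h j
        by_cases hj : j = i <;> simp [hj, h]
      · intro h
        have := h i
        simpa using this
    rw [hset, hμ, Measure.pi_pi]
    calc (∏ j : Fin m, P (if j = i then A else Set.univ))
        = ∏ j : Fin m, (if j = i then P A else 1) := by
          apply Finset.prod_congr rfl; intro k _; by_cases hk : k = i <;> simp [hk]
      _ = P A := prod_ite_one_eq i _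
  have hSij : ∀ i j, i ≠ j → μ ({x : Fin m → ℝ | x i ∈ A} ∩ {x | x j ∈ A}) = P A * P A := by
    intro i j hij
    have hset : {x : Fin m → ℝ | x i ∈ A} ∩ {x | x j ∈ A} =
        Set.pi Set.univ (fun k => if k = i then A else if k = j then A else Set.univ) := by
      ext x
      simp only [Set.mem_inter_iff, Set.mem_setOf_eq, Set.mem_pi, Set.mem_univ, forall_true_left]
      constructor
      · rintro ⟨h1, h2⟩ k
        by_cases hk : k = i
        · simp [hk, h1]
        · by_cases hk2 : k = j <;> simp [hk, hk2, h2]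
      · intro h
        refine ⟨?_, ?_⟩
        · have := h i; simpa using this
        · have := h j; simpa [if_neg hij.symm] using this
    rw [hset, hμ, Measure.pi_pi]
    calc (∏ k : Fin m, P (if k = i then A else if k = j then A else Set.univ))
        = ∏ k : Fin m, (if k = i then P A else if k = j then P A else 1) := by
          apply Finset.prod_congr rfl; intro k _
          by_cases hk : k = i
          · simp [hk]
          · by_cases hk2 : k = j <;> simp [hk, hk2]
      _ = P A * P A := prod_ite_two_eq hij _
  have hfi_int : ∀ i, Integrable (f i) μ := by
    intro i
    rw [hfind i]
    exact (integrable_const (1:ℝ)).indicator (hSmeas i)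
  have hint1 : ∀ i, ∫ x, f i x ∂μ = p := by
    intro i
    rw [hfind i]
    rw [integral_indicator_const (1:ℝ) (hSmeas i)]
    simp [measureReal_def, hSi i, hp]
  have hprod_ind : ∀ i j, (fun x => f i x * f j x) =
      Set.indicator ({x : Fin m → ℝ | x i ∈ A} ∩ {x | x j ∈ A}) (fun _ => (1:ℝ)) := by
    intro i j; ext x
    by_cases h1 : x i ∈ A <;> by_cases h2 : x j ∈ A <;>
      simp [hf, Set.indicator_apply, h1, h2]
  have hfij_int : ∀ i j, Integrable (fun x => f i x * f j x) μ := by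
    intro i j
    rw [hprod_ind i j]
    exact (integrable_const (1:ℝ)).indicator ((hSmeas i).inter (hSmeas j))
  have hint2 : ∀ i j, ∫ x, f i x * f j x ∂μ = if i = j then p else p ^ 2 := by
    intro i j
    by_cases hij : i = j
    · subst hij
      rw [if_pos rfl]
      have : (fun x => f i x * f i x) = f i := by
        ext x; by_cases h : x i ∈ A <;> simp [hf, Set.indicator_apply, h]
      rw [this, hint1 i]
    · rw [if_neg hij, hprod_ind i j, integral_indicator_const (1:ℝ)
        ((hSmeas i).inter (hSmeas j)), measureReal_def, hSij i j hij]
      simp [hp, ENNReal.toReal_mul]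
      ring
  -- the centered sum
  set g : (Fin m → ℝ) → ℝ := fun x => (∑ i, f i x) - m * p with hg
  have hsum_int : Integrable (fun x => ∑ i, f i x) μ :=
    integrable_finset_sum _ fun i _ => hfi_int i
  have hdsum_int : Integrable (fun x => ∑ i, ∑ j, f i x * f j x) μ :=
    integrable_finset_sum _ fun i _ => integrable_finset_sum _ fun j _ => hfij_int i j
  have hg2 : ∀ x, g x ^ 2 =
      ((∑ i, ∑ j, f i x * f j x) - 2 * ((m:ℝ) * p) * (∑ i, f i x)) + ((m:ℝ) * p) ^ 2 := by
    intro x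
    have hsq : (∑ i, f i x) * (∑ j, f j x) = ∑ i, ∑ j, f i x * f j x :=
      Finset.sum_mul_sum _ _ _ _
    have hgx : g x = (∑ i, f i x) - m * p := rfl
    rw [hgx, ← hsq]
    ring
  have hg2_int : Integrable (fun x => g x ^ 2) μ := by
    have : (fun x => g x ^ 2) = fun x =>
        ((∑ i, ∑ j, f i x * f j x) - 2 * ((m:ℝ) * p) * (∑ i, f i x)) + ((m:ℝ) * p) ^ 2 := by
      ext x; exact hg2 x
    rw [this]
    exact ((hdsum_int.sub (hsum_int.const_mul _)).add (integrable_const _))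
  have hI : ∫ x, g x ^ 2 ∂μ = (m:ℝ) * p - m * p ^ 2 := by
    have h1 : ∫ x, g x ^ 2 ∂μ = ∫ x,
        (((∑ i, ∑ j, f i x * f j x) - 2 * ((m:ℝ) * p) * (∑ i, f i x)) + ((m:ℝ) * p) ^ 2) ∂μ := by
      apply integral_congr_ae
      filter_upwards with x using hg2 x
    have hA1 : Integrable (fun x =>
        (∑ i, ∑ j, f i x * f j x) - 2 * ((m:ℝ) * p) * (∑ i, f i x)) μ :=
      hdsum_int.sub (hsum_int.const_mul _)
    have hA2 : Integrable (fun x => 2 * ((m:ℝ) * p) * (∑ i, f i x)) μ :=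
      hsum_int.const_mul _
    rw [h1, integral_add hA1 (integrable_const _),
      integral_sub hdsum_int hA2, integral_finset_sum _
        (fun i _ => integrable_finset_sum _ fun j _ => hfij_int i j)]
    have h2 : ∀ i : Fin m, ∫ x, ∑ j, f i x * f j x ∂μ = (m:ℝ) * p ^ 2 + (p - p ^ 2) := by
      intro i
      rw [integral_finset_sum _ (fun j _ => hfij_int i j)]
      have : ∀ j : Fin m, ∫ x, f i x * f j x ∂μ = p ^ 2 + if i = j then p - p ^ 2 else 0 := by
        intro j
        rw [hint2 i j]
        by_cases hij : i = j <;> simp [hij]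
      rw [Finset.sum_congr rfl fun j _ => this j, Finset.sum_add_distrib, Finset.sum_const,
        Finset.card_univ, Fintype.card_fin, Finset.sum_ite_eq _ i, if_pos (Finset.mem_univ i)]
      simp [mul_comm]
    rw [Finset.sum_congr rfl fun i _ => h2 i, Finset.sum_const, Finset.card_univ,
      Fintype.card_fin, integral_const_mul, integral_finset_sum _ (fun i _ => hfi_int i),
      Finset.sum_congr rfl fun i _ => hint1 i, Finset.sum_const, Finset.card_univ,
      Fintype.card_fin, integral_const]
    simp only [measureReal_def, measure_univ, ENNReal.toReal_one, smul_eq_mul, nsmul_eq_mul]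
    ring
  -- Markov
  have hset_eq : {x | c ≤ |g x|} = {x | c ^ 2 ≤ g x ^ 2} := by
    ext x
    simp only [Set.mem_setOf_eq]
    rw [← sq_abs (g x)]
    exact (pow_le_pow_iff_left₀ hc.le (abs_nonneg _) two_ne_zero).symm
  have hmark := mul_meas_ge_le_integral_of_nonneg
    (Eventually.of_forall fun x => sq_nonneg (g x)) hg2_int (c ^ 2)
  rw [hI] at hmark
  have hc2 : (0:ℝ) < c ^ 2 := by positivity
  have hfin : μ {x | c ≤ |g x|} ≠ ⊤ := measure_ne_top _ _
  have htoReal : (μ {x | c ≤ |g x|}).toReal ≤ ((m:ℝ) * p) / c ^ 2 := by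
    rw [hset_eq, le_div_iff₀ hc2]
    have hmp2 : (0:ℝ) ≤ (m:ℝ) * p ^ 2 := by positivity
    rw [measureReal_def] at hmark
    nlinarith [hmark]
  have : μ {x | c ≤ |g x|} = ENNReal.ofReal (μ {x | c ≤ |g x|}).toReal :=
    (ENNReal.ofReal_toReal hfin).symm
  calc μ {x | c ≤ |(∑ i, Set.indicator A (fun _ => (1:ℝ)) (x i)) - m * (P A).toReal|}
      = μ {x | c ≤ |g x|} := rfl
    _ = ENNReal.ofReal (μ {x | c ≤ |g x|}).toReal := this
    _ ≤ ENNReal.ofReal ((m : ℝ) * p / c ^ 2) := ENNReal.ofReal_le_ofReal htoReal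

lemma cheb_interval (P : Measure ℝ) [IsProbabilityMeasure P] (F : ℝ → ℝ)
    (hF : ∀ t, F t = (P (Set.Iic t)).toReal) (θ s : ℝ) (m : ℕ) {c : ℝ} (hc : 0 < c) :
    (Measure.pi fun _ : Fin m => P)
      {x | c ≤ |(cnt m x s - cnt m x θ) - m * (F s - F θ)|} ≤
      ENNReal.ofReal ((m : ℝ) * |F s - F θ| / c ^ 2) := by
  rcases le_total θ s with hθs | hθs
  · have hA : MeasurableSet (Set.Ioc θ s) := measurableSet_Ioc
    have hPA : (P (Set.Ioc θ s)).toReal = F s - F θ := by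
      have hsplit : P (Set.Iic θ) + P (Set.Ioc θ s) = P (Set.Iic s) := by
        rw [← measure_union (by exact Set.Iic_disjoint_Ioc le_rfl) hA, Set.Iic_union_Ioc_eq_Iic hθs]
      rw [hF, hF]
      have := congrArg ENNReal.toReal hsplit
      rw [ENNReal.toReal_add (measure_ne_top P _) (measure_ne_top P _)] at this
      linarith
    have hcnt : ∀ x : Fin m → ℝ, cnt m x s - cnt m x θ
        = ∑ i, Set.indicator (Set.Ioc θ s) (fun _ => (1:ℝ)) (x i) := by
      intro x
      rw [cnt, cnt, ← Finset.sum_sub_distrib]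
      apply Finset.sum_congr rfl
      intro i _
      by_cases h1 : x i ≤ θ
      · rw [if_pos h1, if_pos (h1.trans hθs), Set.indicator_of_notMem (by simp [Set.mem_Ioc]; intro h; linarith) _]
        norm_num
      · push_neg at h1
        by_cases h2 : x i ≤ s
        · rw [if_pos h2, if_neg (not_le.mpr h1), Set.indicator_of_mem (Set.mem_Ioc.mpr ⟨h1, h2⟩) _]
          norm_num
        · rw [if_neg h2, if_neg (not_le.mpr h1), Set.indicator_of_notMem (by simp [Set.mem_Ioc]; intro h; linarith) _]
          norm_num
    have hset : {x : Fin m → ℝ | c ≤ |(cnt m x s - cnt m x θ) - m * (F s - F θ)|}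
        = {x : Fin m → ℝ | c ≤ |(∑ i, Set.indicator (Set.Ioc θ s) (fun _ => (1:ℝ)) (x i))
            - m * (P (Set.Ioc θ s)).toReal|} := by
      ext x
      rw [Set.mem_setOf_eq, Set.mem_setOf_eq, hcnt x, hPA]
    rw [hset]
    refine (pi_cheb P hA m hc).trans (ENNReal.ofReal_le_ofReal ?_)
    rw [hPA, abs_of_nonneg (by rw [← hPA]; exact ENNReal.toReal_nonneg)]
  · have hA : MeasurableSet (Set.Ioc s θ) := measurableSet_Ioc
    have hPA : (P (Set.Ioc s θ)).toReal = F θ - F s := by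
      have hsplit : P (Set.Iic s) + P (Set.Ioc s θ) = P (Set.Iic θ) := by
        rw [← measure_union (by exact Set.Iic_disjoint_Ioc le_rfl) hA, Set.Iic_union_Ioc_eq_Iic hθs]
      rw [hF, hF]
      have := congrArg ENNReal.toReal hsplit
      rw [ENNReal.toReal_add (measure_ne_top P _) (measure_ne_top P _)] at this
      linarith
    have hcnt : ∀ x : Fin m → ℝ, cnt m x θ - cnt m x s
        = ∑ i, Set.indicator (Set.Ioc s θ) (fun _ => (1:ℝ)) (x i) := by
      intro x
      rw [cnt, cnt, ← Finset.sum_sub_distrib]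
      apply Finset.sum_congr rfl
      intro i _
      by_cases h1 : x i ≤ s
      · rw [if_pos h1, if_pos (h1.trans hθs), Set.indicator_of_notMem (by simp [Set.mem_Ioc]; intro h; linarith) _]
        norm_num
      · push_neg at h1
        by_cases h2 : x i ≤ θ
        · rw [if_pos h2, if_neg (not_le.mpr h1), Set.indicator_of_mem (Set.mem_Ioc.mpr ⟨h1, h2⟩) _]
          norm_num
        · rw [if_neg h2, if_neg (not_le.mpr h1), Set.indicator_of_notMem (by simp [Set.mem_Ioc]; intro h; linarith) _]
          norm_num
    have hset : {x : Fin m → ℝ | c ≤ |(cnt m x s - cnt m x θ) - m * (F s - F θ)|}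
        = {x : Fin m → ℝ | c ≤ |(∑ i, Set.indicator (Set.Ioc s θ) (fun _ => (1:ℝ)) (x i))
            - m * (P (Set.Ioc s θ)).toReal|} := by
      ext x
      rw [Set.mem_setOf_eq, Set.mem_setOf_eq, ← hcnt x, hPA]
      constructor <;> intro h
      · have : (cnt m x θ - cnt m x s) - (m:ℝ) * (F θ - F s)
            = -((cnt m x s - cnt m x θ) - m * (F s - F θ)) := by ring
        rwa [this, abs_neg]
      · have : (cnt m x s - cnt m x θ) - (m:ℝ) * (F s - F θ)
            = -((cnt m x θ - cnt m x s) - m * (F θ - F s)) := by ring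
        rwa [this, abs_neg]
    rw [hset]
    refine (pi_cheb P hA m hc).trans (ENNReal.ofReal_le_ofReal ?_)
    rw [hPA]
    have : |F s - F θ| = F θ - F s := by
      rw [abs_sub_comm, abs_of_nonneg (by linarith [hPA, ENNReal.toReal_nonneg (a := P (Set.Ioc s θ))])]
    rw [this]

lemma cdf_median_eq_half (P : Measure ℝ) [IsProbabilityMeasure P] (F : ℝ → ℝ)
    (hF : ∀ t, F t = (P (Set.Iic t)).toReal) (θ : ℝ) (hθ : θ = medianOfCDF F)
    (hcF : ContinuousAt F θ) : F θ = 1 / 2 := by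
  have hmono : Monotone F := fun s t hst => by
    rw [hF, hF]
    exact ENNReal.toReal_mono (measure_ne_top P _) (measure_mono (Set.Iic_subset_Iic.mpr hst))
  set S : Set ℝ := {x : ℝ | 1 / 2 ≤ F x} with hS
  have hθ' : θ = sInf S := hθ
  -- S is nonempty
  have htop : Tendsto F atTop (𝓝 1) := by
    have h1 : Tendsto (fun t => P (Set.Iic t)) atTop (𝓝 (P Set.univ)) :=
      tendsto_measure_Iic_atTop P
    rw [measure_univ] at h1
    have h2 := (ENNReal.tendsto_toReal (by norm_num : (1:ℝ≥0∞) ≠ ⊤)).comp h1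
    simp only [ENNReal.toReal_one] at h2
    exact h2.congr fun t => (hF t).symm
  have hSne : S.Nonempty := by
    have : ∀ᶠ t in atTop, (1:ℝ)/2 ≤ F t := htop.eventually_const_le (by norm_num)
    obtain ⟨t, ht⟩ := this.exists
    exact ⟨t, ht⟩
  -- S is bounded below
  have hbot : Tendsto F atBot (𝓝 0) := by
    have h2 : Tendsto (fun x : ℝ => P (Set.Ioc x 0)) atBot (𝓝 (P (Set.Iic 0))) :=
      tendsto_measure_Ioc_atBot P 0
    have h3 : Tendsto (fun x : ℝ => P (Set.Iic 0) - P (Set.Ioc x 0)) atBot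
        (𝓝 (P (Set.Iic 0) - P (Set.Iic 0))) :=
      ENNReal.Tendsto.sub tendsto_const_nhds h2 (Or.inl (measure_ne_top P _))
    rw [tsub_self] at h3
    have heq : ∀ᶠ x : ℝ in atBot, P (Set.Iic 0) - P (Set.Ioc x 0) = P (Set.Iic x) := by
      filter_upwards [eventually_le_atBot (0:ℝ)] with x hx
      have hsub : Set.Iic 0 \ Set.Ioc x 0 = Set.Iic x := by
        ext y
        simp only [Set.mem_diff, Set.mem_Iic, Set.mem_Ioc, not_and, not_le]
        constructor
        · rintro ⟨hy0, hy⟩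
          by_contra hyx
          push_neg at hyx
          exact absurd (hy hyx) (not_lt.mpr hy0)
        · intro hyx
          exact ⟨hyx.trans hx, fun hxy => absurd hyx (not_le.mpr hxy)⟩
      rw [← hsub, measure_diff Set.Ioc_subset_Iic_self measurableSet_Ioc.nullMeasurableSet
        (measure_ne_top P _)]
    have h4 : Tendsto (fun x : ℝ => P (Set.Iic x)) atBot (𝓝 0) :=
      Tendsto.congr' heq h3
    have h5 := (ENNReal.tendsto_toReal (by norm_num : (0:ℝ≥0∞) ≠ ⊤)).comp h4
    simp only [ENNReal.toReal_zero] at h5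
    exact h5.congr fun t => (hF t).symm
  have hSbdd : BddBelow S := by
    have : ∀ᶠ t in atBot, F t < 1/2 := hbot.eventually_lt_const (by norm_num)
    obtain ⟨y, hy⟩ := this.exists
    refine ⟨y, fun z hz => ?_⟩
    by_contra hzy
    push_neg at hzy
    exact absurd (lt_of_le_of_lt (hmono hzy.le) hy) (not_lt.mpr hz)
  -- F θ ≥ 1/2
  have hge : 1/2 ≤ F θ := by
    by_contra hlt
    push_neg at hlt
    have hev : F ⁻¹' Set.Iio (1/2) ∈ 𝓝 θ := hcF (Iio_mem_nhds hlt)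
    obtain ⟨δ, hδ, hball⟩ := Metric.mem_nhds_iff.mp hev
    obtain ⟨z, hzS, hzlt⟩ := exists_lt_of_csInf_lt hSne
      (by rw [← hθ']; linarith : sInf S < θ + δ)
    have hzθ : θ ≤ z := by
      have := csInf_le hSbdd hzS
      rw [← hθ'] at this
      exact this
    have : z ∈ Metric.ball θ δ := by
      rw [Metric.mem_ball, Real.dist_eq, abs_of_nonneg (by linarith)]
      linarith
    have := hball this
    simp only [Set.mem_preimage, Set.mem_Iio] at this
    exact absurd hzS (by simp only [hS, Set.mem_setOf_eq]; linarith)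
  -- F θ ≤ 1/2
  have hle : F θ ≤ 1/2 := by
    by_contra hlt
    push_neg at hlt
    have hev : F ⁻¹' Set.Ioi (1/2) ∈ 𝓝 θ := hcF (Ioi_mem_nhds hlt)
    obtain ⟨δ, hδ, hball⟩ := Metric.mem_nhds_iff.mp hev
    have hmem : θ - δ/2 ∈ Metric.ball θ δ := by
      rw [Metric.mem_ball, Real.dist_eq]
      rw [abs_of_nonpos (by linarith)]
      linarith
    have h12 : θ - δ/2 ∈ S := by
      have := hball hmem
      simp only [Set.mem_preimage, Set.mem_Ioi] at this
      simp only [hS, Set.mem_setOf_eq]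
      linarith
    have h13 := csInf_le hSbdd h12
    rw [← hθ'] at h13
    linarith
  linarith

lemma tendsto_sqrt_nat_atTop : Tendsto (fun m : ℕ => Real.sqrt m) atTop atTop := by
  apply tendsto_atTop_atTop_of_monotone (fun m n h => Real.sqrt_le_sqrt (Nat.cast_le.mpr h))
  intro b
  refine ⟨⌈(max b 0)^2⌉₊, ?_⟩
  calc b ≤ max b 0 := le_max_left _ _
    _ = Real.sqrt ((max b 0)^2) := (Real.sqrt_sq (le_max_right _ _)).symm
    _ ≤ Real.sqrt (⌈(max b 0)^2⌉₊ : ℝ) := Real.sqrt_le_sqrt (Nat.le_ceil _)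

lemma sqrt_slope_tendsto (F : ℝ → ℝ) (θ a t : ℝ) (hd : HasDerivAt F a θ)
    (hFθ : F θ = 1 / 2) :
    Tendsto (fun m : ℕ => Real.sqrt m * (F (θ + t / Real.sqrt m) - 1/2)) atTop (𝓝 (a * t)) := by
  have hsqrt : Tendsto (fun m : ℕ => Real.sqrt m) atTop atTop := tendsto_sqrt_nat_atTop
  by_cases ht : t = 0
  · subst ht
    simp only [zero_div, add_zero, hFθ, sub_self, mul_zero]
    exact tendsto_const_nhds
  · have hz : Tendsto (fun m : ℕ => θ + t / Real.sqrt m) atTop (𝓝[≠] θ) := by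
      apply tendsto_nhdsWithin_of_tendsto_nhds_of_eventually_within
      · have : Tendsto (fun m : ℕ => t / Real.sqrt m) atTop (𝓝 0) :=
          hsqrt.const_div_atTop t
        have h2 := (tendsto_const_nhds (x := θ)).add this
        simpa using h2
      · filter_upwards [hsqrt.eventually_gt_atTop 0] with m hm
        simp only [Set.mem_compl_iff, Set.mem_singleton_iff]
        intro h
        have h0 : t / Real.sqrt m = 0 := by linarith
        rcases div_eq_zero_iff.mp h0 with h1 | h1
        · exact ht h1
        · exact hm.ne' h1
    have hslope := hasDerivAt_iff_tendsto_slope.mp hd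
    have hcomp : Tendsto (fun m : ℕ => slope F θ (θ + t / Real.sqrt m)) atTop (𝓝 a) :=
      hslope.comp hz
    have := hcomp.const_mul t
    rw [mul_comm a t] at *
    apply Tendsto.congr' _ this
    filter_upwards [hsqrt.eventually_gt_atTop 0] with m hm
    rw [slope_def_field, hFθ, show θ + t / Real.sqrt m - θ = t / Real.sqrt m by ring]
    set y := F (θ + t / Real.sqrt m)
    field_simp

set_option maxHeartbeats 1000000 in
/-- If the c.d.f. `F` of `P` is continuously differentiable at its median
`θ(P)` with positive derivative `F'(θ(P))`, then the sample median satisfies the asymptotic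
linear expansion
`√m (θ(P̂ₘ) - θ(P)) = m^{-1/2} Σᵢ (1/2 - 1{Xᵢ ≤ θ(P)})/F'(θ(P)) + o_P(1)`,
where `P̂ₘ` is the empirical distribution of `X₁,...,Xₘ` i.i.d. `P`. -/
theorem sample_median_asymptotically_linear
    (P : Measure ℝ) [IsProbabilityMeasure P]
    (F : ℝ → ℝ) (hF : ∀ t, F t = (P (Set.Iic t)).toReal)
    (θP : ℝ) (hθP : θP = medianOfCDF F)
    -- F continuously differentiable at θ(P) with positive derivative
    (F' : ℝ → ℝ) (hderiv : ∀ᶠ x in 𝓝 θP, HasDerivAt F (F' x) x)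
    (hcont : ContinuousAt F' θP) (hpos : 0 < F' θP) :
    ∀ ε > 0, Tendsto (fun m : ℕ => (Measure.pi fun _ : Fin m => P)
      {x | ε ≤ |Real.sqrt m * (medianOfCDF (empiricalCDF m x) - θP) -
        (Real.sqrt m)⁻¹ *
          ∑ i, (1 / 2 - if x i ≤ θP then (1 : ℝ) else 0) / F' θP|})
      atTop (𝓝 0) := by
  intro ε hε
  have hd : HasDerivAt F (F' θP) θP := hderiv.self_of_nhds
  set a : ℝ := F' θP with ha
  have ha0 : 0 < a := hpos
  have hFθ : F θP = 1 / 2 := cdf_median_eq_half P F hF θP hθP hd.continuousAt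
  have hcF : ContinuousAt F θP := hd.continuousAt
  have hslope : ∀ t : ℝ, Tendsto (fun m : ℕ => Real.sqrt m * (F (θP + t / Real.sqrt m) - 1/2))
      atTop (𝓝 (a * t)) := fun t => sqrt_slope_tendsto F θP a t hd hFθ
  have hsqrt := tendsto_sqrt_nat_atTop
  -- vanishing Chebyshev events along a moving point
  have hvan : ∀ t c : ℝ, 0 < c → Tendsto (fun m : ℕ => (Measure.pi fun _ : Fin m => P)
      {x | c * Real.sqrt m ≤ |(cnt m x (θP + t / Real.sqrt m) - cnt m x θP)
        - m * (F (θP + t / Real.sqrt m) - F θP)|}) atTop (𝓝 0) := by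
    intro t c hc
    have hFlim : Tendsto (fun m : ℕ => |F (θP + t / Real.sqrt m) - F θP| / c ^ 2)
        atTop (𝓝 0) := by
      have h1 : Tendsto (fun m : ℕ => θP + t / Real.sqrt m) atTop (𝓝 θP) := by
        have h0 : Tendsto (fun m : ℕ => t / Real.sqrt m) atTop (𝓝 0) :=
          hsqrt.const_div_atTop t
        have h2 := (tendsto_const_nhds (x := θP) (f := (atTop : Filter ℕ))).add h0
        simpa using h2
      have h2 : Tendsto (fun m : ℕ => F (θP + t / Real.sqrt m)) atTop (𝓝 (F θP)) :=
        hcF.tendsto.comp h1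
      have h3 : Tendsto (fun m : ℕ => |F (θP + t / Real.sqrt m) - F θP|) atTop (𝓝 0) := by
        have h4 := (h2.sub (tendsto_const_nhds (x := F θP))).abs
        simpa using h4
      simpa using h3.div_const (c ^ 2)
    have hup : Tendsto (fun m : ℕ => ENNReal.ofReal (|F (θP + t / Real.sqrt m) - F θP| / c ^ 2))
        atTop (𝓝 0) := by
      have h5 := ENNReal.tendsto_ofReal hFlim
      simpa using h5
    refine tendsto_of_tendsto_of_tendsto_of_le_of_le' tendsto_const_nhds hup
      (Eventually.of_forall fun m => zero_le) ?_
    filter_upwards [hsqrt.eventually_gt_atTop 0] with m hm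
    have hm0 : (0:ℝ) < m := Real.sqrt_pos.mp hm
    refine (cheb_interval P F hF θP (θP + t / Real.sqrt m) m (mul_pos hc hm)).trans
      (ENNReal.ofReal_le_ofReal (le_of_eq ?_))
    rw [mul_pow, Real.sq_sqrt hm0.le]
    field_simp
  -- "median too small" events vanish
  have hUP : ∀ t₁ t₂ : ℝ, t₁ < t₂ → Tendsto (fun m : ℕ => (Measure.pi fun _ : Fin m => P)
      {x | (m:ℝ)/2 ≤ cnt m x (θP + t₁ / Real.sqrt m) ∧
           cnt m x θP ≤ (m:ℝ)/2 - a * t₂ * Real.sqrt m}) atTop (𝓝 0) := by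
    intro t₁ t₂ h12
    have hd12 : 0 < t₂ - t₁ := by linarith
    have hc : 0 < a * (t₂ - t₁) / 2 := by positivity
    refine tendsto_of_tendsto_of_tendsto_of_le_of_le' tendsto_const_nhds (hvan t₁ _ hc)
      (Eventually.of_forall fun m => zero_le) ?_
    have hev : ∀ᶠ m : ℕ in atTop, Real.sqrt m * (F (θP + t₁ / Real.sqrt m) - 1/2)
        < a * t₁ + a * (t₂ - t₁) / 2 :=
      (hslope t₁).eventually_lt_const (by nlinarith)
    filter_upwards [hev, hsqrt.eventually_gt_atTop 0] with m hm1 hm2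
    apply measure_mono
    rintro x ⟨hx1, hx2⟩
    simp only [Set.mem_setOf_eq]
    have hmsq : ((m:ℕ):ℝ) = Real.sqrt m * Real.sqrt m :=
      (Real.mul_self_sqrt (Nat.cast_nonneg m)).symm
    have h5 : (m:ℝ) * (F (θP + t₁ / Real.sqrt m) - F θP)
        ≤ Real.sqrt m * (a * t₁ + a * (t₂ - t₁)/2) := by
      rw [hFθ]
      calc (m:ℝ) * (F (θP + t₁ / Real.sqrt m) - 1/2)
          = Real.sqrt m * (Real.sqrt m * (F (θP + t₁ / Real.sqrt m) - 1/2)) := by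
            rw [← mul_assoc, ← hmsq]
        _ ≤ Real.sqrt m * (a * t₁ + a * (t₂ - t₁)/2) :=
            mul_le_mul_of_nonneg_left hm1.le (Real.sqrt_nonneg _)
    have key : a * (t₂ - t₁) / 2 * Real.sqrt m ≤
        (cnt m x (θP + t₁ / Real.sqrt m) - cnt m x θP)
          - m * (F (θP + t₁ / Real.sqrt m) - F θP) := by nlinarith
    exact key.trans (le_abs_self _)
  -- "median too large" events vanish
  have hDOWN : ∀ t₁ t₂ : ℝ, t₂ < t₁ → Tendsto (fun m : ℕ => (Measure.pi fun _ : Fin m => P)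
      {x | cnt m x (θP + t₁ / Real.sqrt m) < (m:ℝ)/2 ∧
           (m:ℝ)/2 - a * t₂ * Real.sqrt m ≤ cnt m x θP}) atTop (𝓝 0) := by
    intro t₁ t₂ h12
    have hd12 : 0 < t₁ - t₂ := by linarith
    have hc : 0 < a * (t₁ - t₂) / 2 := by positivity
    refine tendsto_of_tendsto_of_tendsto_of_le_of_le' tendsto_const_nhds (hvan t₁ _ hc)
      (Eventually.of_forall fun m => zero_le) ?_
    have hev : ∀ᶠ m : ℕ in atTop, a * t₁ - a * (t₁ - t₂) / 2
        < Real.sqrt m * (F (θP + t₁ / Real.sqrt m) - 1/2) :=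
      (hslope t₁).eventually_const_lt (by nlinarith)
    filter_upwards [hev, hsqrt.eventually_gt_atTop 0] with m hm1 hm2
    apply measure_mono
    rintro x ⟨hx1, hx2⟩
    simp only [Set.mem_setOf_eq]
    have hmsq : ((m:ℕ):ℝ) = Real.sqrt m * Real.sqrt m :=
      (Real.mul_self_sqrt (Nat.cast_nonneg m)).symm
    have h5 : Real.sqrt m * (a * t₁ - a * (t₁ - t₂)/2)
        ≤ (m:ℝ) * (F (θP + t₁ / Real.sqrt m) - F θP) := by
      rw [hFθ]
      calc Real.sqrt m * (a * t₁ - a * (t₁ - t₂)/2)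
          ≤ Real.sqrt m * (Real.sqrt m * (F (θP + t₁ / Real.sqrt m) - 1/2)) :=
            mul_le_mul_of_nonneg_left hm1.le (Real.sqrt_nonneg _)
        _ = (m:ℝ) * (F (θP + t₁ / Real.sqrt m) - 1/2) := by
            rw [← mul_assoc, ← hmsq]
    have key : (cnt m x (θP + t₁ / Real.sqrt m) - cnt m x θP)
          - m * (F (θP + t₁ / Real.sqrt m) - F θP) ≤ -(a * (t₁ - t₂) / 2 * Real.sqrt m) := by
      nlinarith
    calc a * (t₁ - t₂) / 2 * Real.sqrt m
        ≤ -((cnt m x (θP + t₁ / Real.sqrt m) - cnt m x θP)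
            - m * (F (θP + t₁ / Real.sqrt m) - F θP)) := by linarith
      _ ≤ |(cnt m x (θP + t₁ / Real.sqrt m) - cnt m x θP)
            - m * (F (θP + t₁ / Real.sqrt m) - F θP)| := neg_le_abs _
  -- tightness bound
  have hTight : ∀ K : ℝ, 0 < K → ∀ m : ℕ, 0 < Real.sqrt m →
      (Measure.pi fun _ : Fin m => P)
        {x | a * K * Real.sqrt m ≤ |cnt m x θP - m * (1/2 : ℝ)|}
        ≤ ENNReal.ofReal (1 / (2 * (a*K)^2)) := by
    intro K hK m hm
    have hPA : (P (Set.Iic θP)).toReal = 1/2 := by rw [← hF]; exact hFθ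
    have h1 := pi_cheb P (measurableSet_Iic (a := θP)) m
      (c := a * K * Real.sqrt m) (by positivity)
    have hsets : {x : Fin m → ℝ | a*K*Real.sqrt m ≤ |cnt m x θP - m * (1/2:ℝ)|}
        = {x : Fin m → ℝ | a*K*Real.sqrt m ≤
            |(∑ i, Set.indicator (Set.Iic θP) (fun _ => (1:ℝ)) (x i))
              - m * (P (Set.Iic θP)).toReal|} := by
      ext x
      have hc : cnt m x θP = ∑ i, Set.indicator (Set.Iic θP) (fun _ => (1:ℝ)) (x i) := by
        rw [cnt]
        exact Finset.sum_congr rfl fun i _ => by simp [Set.indicator_apply, Set.mem_Iic]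
      rw [Set.mem_setOf_eq, Set.mem_setOf_eq, hc, hPA]
    rw [hsets]
    refine h1.trans (ENNReal.ofReal_le_ofReal (le_of_eq ?_))
    have hm0 : (0:ℝ) < m := Real.sqrt_pos.mp hm
    rw [hPA, mul_pow, Real.sq_sqrt hm0.le]
    field_simp
  -- main epsilon-management
  rw [ENNReal.tendsto_nhds_zero]
  intro η hη
  obtain ⟨r, hr0, hrη⟩ : ∃ r : ℝ, 0 < r ∧ ENNReal.ofReal r ≤ η / 2 := by
    rcases eq_or_ne η ⊤ with h | h
    · exact ⟨1, one_pos, by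
        rw [h, ENNReal.top_div_of_lt_top (by norm_num)]; exact le_top⟩
    · have hη2top : η / 2 ≠ ⊤ := by
        simp [ENNReal.div_eq_top, h]
      have hη20 : η / 2 ≠ 0 := by
        simp [ENNReal.div_eq_zero_iff, hη.ne']
      refine ⟨(η/2).toReal, ENNReal.toReal_pos hη20 hη2top, ?_⟩
      rw [ENNReal.ofReal_toReal hη2top]
  set K : ℝ := max 1 (1 / (a * Real.sqrt r)) with hKdef
  have hK0 : (0:ℝ) < K := lt_of_lt_of_le one_pos (le_max_left _ _)
  have htb : 1 / (2 * (a*K)^2) ≤ r := by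
    have h1 : 1 / (a * Real.sqrt r) ≤ K := le_max_right _ _
    have hsr : 0 < Real.sqrt r := Real.sqrt_pos.mpr hr0
    have h2 : 1 / Real.sqrt r ≤ a * K := by
      have h3 := mul_le_mul_of_nonneg_left h1 ha0.le
      calc 1 / Real.sqrt r = a * (1 / (a * Real.sqrt r)) := by field_simp
        _ ≤ a * K := h3
    have h4 : 1 / r ≤ (a*K)^2 := by
      have h5 : (1 / Real.sqrt r)^2 ≤ (a*K)^2 := by
        apply pow_le_pow_left₀ (by positivity) h2
      calc 1/r = (1 / Real.sqrt r)^2 := by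
            rw [div_pow, one_pow, Real.sq_sqrt hr0.le]
        _ ≤ (a*K)^2 := h5
    have haK : (0:ℝ) < a * K := by positivity
    calc 1 / (2 * (a*K)^2) ≤ 1 / (2 * (1/r)) := by
          apply one_div_le_one_div_of_le (by positivity)
          nlinarith
      _ = r / 2 := by field_simp
      _ ≤ r := by linarith
  set N : ℕ := ⌈4 * K / ε⌉₊ with hNdef
  have hN0 : 0 < N := Nat.ceil_pos.mpr (by positivity)
  set tt : ℕ → ℝ := fun j => -K + j * (ε/2) with httdef
  have htN : K ≤ tt N := by
    have h1 : (4*K/ε : ℝ) ≤ N := Nat.le_ceil _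
    have h2 : (4*K/ε) * (ε/2) = 2*K := by field_simp; ring
    have h3 : (4*K/ε) * (ε/2) ≤ (N:ℝ) * (ε/2) :=
      mul_le_mul_of_nonneg_right h1 (by positivity)
    simp only [httdef]
    nlinarith
  have httsucc : ∀ j : ℕ, tt (j+1) = tt j + ε/2 := by
    intro j
    simp only [httdef]
    push_cast
    ring
  -- sum of bad-event measures tends to zero
  have hsumlim : Tendsto (fun m : ℕ => ∑ j ∈ Finset.range N,
      ((Measure.pi fun _ : Fin m => P)
        {x | (m:ℝ)/2 ≤ cnt m x (θP + (tt j - ε/2) / Real.sqrt m) ∧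
             cnt m x θP ≤ (m:ℝ)/2 - a * (tt j) * Real.sqrt m} +
       (Measure.pi fun _ : Fin m => P)
        {x | cnt m x (θP + (tt (j+1) + ε/4) / Real.sqrt m) < (m:ℝ)/2 ∧
             (m:ℝ)/2 - a * (tt (j+1)) * Real.sqrt m ≤ cnt m x θP}))
      atTop (𝓝 0) := by
    have h6 := tendsto_finset_sum (Finset.range N) (fun j _ =>
      (hUP (tt j - ε/2) (tt j) (by linarith)).add
        (hDOWN (tt (j+1) + ε/4) (tt (j+1)) (by linarith)))
    simpa using h6
  have hη2pos : (0:ℝ≥0∞) < η / 2 := ENNReal.half_pos hη.ne'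
  have hsum_ev := hsumlim.eventually_lt_const hη2pos
  filter_upwards [hsum_ev, eventually_gt_atTop 0, hsqrt.eventually_gt_atTop 0]
    with m hsm hm1 hm2
  have hm0 : (0:ℝ) < m := by exact_mod_cast hm1
  have haS : 0 < a * Real.sqrt m := by positivity
  -- the pointwise inclusion
  have hincl : {x : Fin m → ℝ | ε ≤ |Real.sqrt m * (medianOfCDF (empiricalCDF m x) - θP) -
        (Real.sqrt m)⁻¹ * ∑ i, (1 / 2 - if x i ≤ θP then (1 : ℝ) else 0) / a|} ⊆
      {x | a * K * Real.sqrt m ≤ |cnt m x θP - m * (1/2 : ℝ)|} ∪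
      ⋃ j ∈ Finset.range N,
        ({x | (m:ℝ)/2 ≤ cnt m x (θP + (tt j - ε/2) / Real.sqrt m) ∧
             cnt m x θP ≤ (m:ℝ)/2 - a * (tt j) * Real.sqrt m} ∪
         {x | cnt m x (θP + (tt (j+1) + ε/4) / Real.sqrt m) < (m:ℝ)/2 ∧
             (m:ℝ)/2 - a * (tt (j+1)) * Real.sqrt m ≤ cnt m x θP}) := by
    intro x hx
    simp only [Set.mem_setOf_eq] at hx
    clear_value tt K N
    set M : ℝ := medianOfCDF (empiricalCDF m x) with hMdef
    have hSx : (Real.sqrt m)⁻¹ * ∑ i, (1 / 2 - if x i ≤ θP then (1 : ℝ) else 0) / a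
        = ((m:ℝ)/2 - cnt m x θP) / (a * Real.sqrt m) := by
      have hsum : ∑ i, (1 / 2 - if x i ≤ θP then (1 : ℝ) else 0) / a
          = ((m:ℝ)/2 - cnt m x θP) / a := by
        rw [← Finset.sum_div]
        congr 1
        rw [Finset.sum_sub_distrib, Finset.sum_const, Finset.card_univ, Fintype.card_fin,
          nsmul_eq_mul, cnt]
        ring
      rw [hsum, eq_div_iff (ne_of_gt haS)]
      field_simp
    rw [hSx] at hx
    set Sx : ℝ := ((m:ℝ)/2 - cnt m x θP) / (a * Real.sqrt m) with hSxdef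
    have hT_le : ∀ u : ℝ, Real.sqrt m * (M - θP) ≤ u ↔
        (m:ℝ)/2 ≤ cnt m x (θP + u / Real.sqrt m) := by
      intro u
      rw [mul_comm, ← le_div_iff₀ hm2, sub_le_iff_le_add', hMdef,
        empirical_median_le_iff hm1 x, cnt]
    have hS_le : ∀ u : ℝ, Sx ≤ u ↔ (m:ℝ)/2 - a * u * Real.sqrt m ≤ cnt m x θP := by
      intro u
      rw [hSxdef, div_le_iff₀ haS, show u * (a * Real.sqrt m) = a * u * Real.sqrt m by ring]
      constructor <;> intro h <;> linarith
    have hS_ge : ∀ u : ℝ, u ≤ Sx ↔ cnt m x θP ≤ (m:ℝ)/2 - a * u * Real.sqrt m := by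
      intro u
      rw [hSxdef, le_div_iff₀ haS, show u * (a * Real.sqrt m) = a * u * Real.sqrt m by ring]
      constructor <;> intro h <;> linarith
    clear_value M Sx
    by_cases hSK : |Sx| ≤ K
    · obtain ⟨hKS1, hKS2⟩ := abs_le.mp hSK
      obtain ⟨j, hjN, hj1, hj2⟩ : ∃ j : ℕ, j < N ∧ tt j ≤ Sx ∧ Sx ≤ tt (j+1) := by
        have hhε : (0:ℝ) < ε/2 := by linarith
        have hnn : 0 ≤ (Sx + K) / (ε/2) := div_nonneg (by linarith) hhε.le
        obtain ⟨j0, hj0def⟩ : ∃ j0 : ℕ, j0 = ⌊(Sx + K) / (ε/2)⌋₊ := ⟨_, rfl⟩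
        by_cases hcase : j0 ≤ N - 1
        · refine ⟨j0, by omega, ?_, ?_⟩
          · have h1 := (le_div_iff₀ hhε).mp (Nat.floor_le hnn)
            rw [← hj0def] at h1
            simp only [httdef]
            linarith
          · have h2 := Nat.lt_floor_add_one ((Sx + K) / (ε/2))
            have h3 := (div_lt_iff₀ hhε).mp h2
            rw [← hj0def] at h3
            simp only [httdef]
            push_cast
            push_cast at h3
            nlinarith
        · push_neg at hcase
          refine ⟨N-1, by omega, ?_, ?_⟩
          · have hNj0 : (N:ℝ) ≤ j0 := by exact_mod_cast (by omega : N ≤ j0)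
            have h1 : (N:ℝ) ≤ (Sx + K)/(ε/2) := by
              rw [hj0def] at hNj0
              exact hNj0.trans (Nat.floor_le hnn)
            have h2 : (N:ℝ) * (ε/2) ≤ Sx + K := (le_div_iff₀ hhε).mp h1
            have hcast : ((N-1:ℕ):ℝ) = (N:ℝ) - 1 := by
              have h9 : 1 ≤ N := hN0
              push_cast [h9]
              ring
            simp only [httdef, hcast]
            nlinarith
          · have hsucc : (N-1)+1 = N := by omega
            rw [hsucc]
            linarith [htN]
      have habs' : tt (j+1) = tt j + ε/2 := httsucc j
      rcases le_abs.mp hx with hcase2 | hcase2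
      · -- ε ≤ Tx - Sx
        right
        refine Set.mem_iUnion.mpr ⟨j, Set.mem_iUnion.mpr ⟨Finset.mem_range.mpr hjN, ?_⟩⟩
        right
        refine ⟨?_, (hS_le (tt (j+1))).mp hj2⟩
        by_contra hcon
        push_neg at hcon
        have h7 := (hT_le (tt (j+1) + ε/4)).mpr hcon
        linarith
      · -- ε ≤ -(Tx - Sx)
        right
        refine Set.mem_iUnion.mpr ⟨j, Set.mem_iUnion.mpr ⟨Finset.mem_range.mpr hjN, ?_⟩⟩
        left
        refine ⟨(hT_le (tt j - ε/2)).mp (by linarith), (hS_ge (tt j)).mp hj1⟩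
    · left
      push_neg at hSK
      simp only [Set.mem_setOf_eq]
      have habs : |Sx| = |cnt m x θP - (m:ℝ)*(1/2)| / (a * Real.sqrt m) := by
        rw [hSxdef, abs_div, abs_of_pos haS]
        have h8 : (m:ℝ)/2 - cnt m x θP = -(cnt m x θP - m*(1/2)) := by ring
        rw [h8, abs_neg]
      rw [habs, lt_div_iff₀ haS] at hSK
      nlinarith
  refine le_trans (measure_mono hincl) ?_
  refine le_trans (measure_union_le _ _) ?_
  refine le_trans (add_le_add_right ((measure_biUnion_finset_le _ _).trans
    (Finset.sum_le_sum fun j _ => measure_union_le _ _)) _) ?_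
  refine le_trans (add_le_add (le_trans (hTight K hK0 m hm2)
    (le_trans (ENNReal.ofReal_le_ofReal htb) hrη)) hsm.le) ?_
  rw [ENNReal.add_halves]
end
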